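/- arXiv:2105.04378 — 7 statements merged into one kernel-verified Lean document; each statement's English description precedes it below -/
import Mathlib

section
/- Let B = (V, W, E) be a finite bipartite graph and α : V × V → {0, ..., r} an association (i.e., α(X,X) = r for all X and α is symmetric). Suppose B is α-regular: for all (X,Y) ∈ V × V, the number of common neighbors W_ℓ(α) := |{w ∈ W : (X,w) ∈ E and (Y,w) ∈ E}| depends only on ℓ = α(X,Y). If W_r(α) > 0, then the number F of non-isolated vertices of W satisfies F ≥ W_r(α)² · |V|² / (Σ_{ℓ=0}^r W_ℓ(α) · |α⁻¹(ℓ)|). -/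
/-- Lower bound on the number of non-isolated right vertices of a bipartite
graph which is regular with respect to an association `α` of magnitude `r`. -/
theorem stmt_1 (V W : Type) [Fintype V] [Fintype W] [Nonempty V] [Nonempty W]
    (E : V → W → Prop) (r : ℕ)
    (α : V → V → ℕ) (hle : ∀ X Y, α X Y ≤ r) (hrefl : ∀ X, α X X = r)
    (hsymm : ∀ X Y, α X Y = α Y X)
    (Wl : ℕ → ℕ) (hreg : ∀ X Y : V, Nat.card {w : W // E X w ∧ E Y w} = Wl (α X Y))
    (hpos : 0 < Wl r) :
    (Wl r : ℝ) ^ 2 * (Fintype.card V : ℝ) ^ 2 /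
        (∑ l ∈ Finset.range (r + 1),
          (Wl l : ℝ) * (Nat.card {p : V × V // α p.1 p.2 = l} : ℝ))
      ≤ (Nat.card {w : W // ∃ v : V, E v w} : ℝ) := by
  classical
  set d : W → ℕ := fun w => (Finset.univ.filter (fun v => E v w)).card with hd
  -- codegree identity
  have hcodeg : ∀ X Y : V, (Finset.univ.filter (fun w => E X w ∧ E Y w)).card = Wl (α X Y) := by
    intro X Y
    rw [← hreg X Y, Nat.card_eq_fintype_card, Fintype.card_subtype]
  have key1 : ∑ w, d w = Wl r * Fintype.card V := by
    have : ∑ w, d w = ∑ v : V, (Finset.univ.filter (fun w => E v w)).card := by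
      simp only [hd, Finset.card_filter]
      rw [Finset.sum_comm]
    rw [this]
    have hdeg : ∀ v : V, (Finset.univ.filter (fun w => E v w)).card = Wl r := by
      intro v
      have := hcodeg v v
      rw [hrefl] at this
      simpa [and_self] using this
    simp [hdeg, mul_comm]
  have key2 : ∑ w, (d w) ^ 2 = ∑ p : V × V, Wl (α p.1 p.2) := by
    have : ∀ w, (d w) ^ 2 = ∑ p : V × V, if E p.1 w ∧ E p.2 w then 1 else 0 := by
      intro w
      rw [Fintype.sum_prod_type]
      simp only [hd, sq, Finset.card_filter, Finset.sum_mul_sum, ite_and]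
      congr 1; ext X
      congr 1; ext Y
      by_cases h1 : E X w <;> by_cases h2 : E Y w <;> simp [h1, h2]
    simp only [this]
    rw [Finset.sum_comm]
    congr 1; ext p
    rw [← hcodeg p.1 p.2, Finset.card_filter]
  have key3 : ∑ p : V × V, Wl (α p.1 p.2) =
      ∑ l ∈ Finset.range (r + 1), Wl l * Nat.card {p : V × V // α p.1 p.2 = l} := by
    rw [← Finset.sum_fiberwise_of_maps_to (g := fun p : V × V => α p.1 p.2)
      (t := Finset.range (r + 1)) (fun p _ => Finset.mem_range.2 (Nat.lt_succ_of_le (hle _ _)))]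
    refine Finset.sum_congr rfl fun l _ => ?_
    rw [Nat.card_eq_fintype_card, Fintype.card_subtype]
    rw [Finset.sum_congr rfl fun p hp => by rw [(Finset.mem_filter.1 hp).2]]
    simp [mul_comm]
  set S : Finset W := Finset.univ.filter (fun w => ∃ v, E v w) with hS
  have hF : Nat.card {w : W // ∃ v : V, E v w} = S.card := by
    rw [Nat.card_eq_fintype_card, Fintype.card_subtype]
  have hzero : ∀ w ∈ Finset.univ, w ∉ S → d w = 0 := by
    intro w _ hw
    simp only [hS, Finset.mem_filter, Finset.mem_univ, true_and] at hw
    push_neg at hw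
    simp [hd, Finset.filter_eq_empty_iff.2 fun v _ => hw v]
  have hsum1 : ∑ w ∈ S, d w = ∑ w, d w :=
    Finset.sum_subset (Finset.subset_univ S) hzero
  have hsum2 : ∑ w ∈ S, (d w) ^ 2 = ∑ w, (d w) ^ 2 :=
    Finset.sum_subset (Finset.subset_univ S) (fun w h1 h2 => by rw [hzero w h1 h2]; ring)
  -- Cauchy-Schwarz over ℝ
  have cauchy : ((∑ w, d w : ℕ) : ℝ) ^ 2 ≤ (S.card : ℝ) * ((∑ w, (d w) ^ 2 : ℕ) : ℝ) := by
    rw [← hsum1, ← hsum2]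
    push_cast
    exact sq_sum_le_card_mul_sum_sq
  have hDpos : (0 : ℝ) < ((∑ w, (d w) ^ 2 : ℕ) : ℝ) := by
    have : 0 < ∑ w, (d w) ^ 2 := by
      by_contra h
      push_neg at h
      have h0 : ∑ w, (d w) ^ 2 = 0 := Nat.le_zero.1 h
      have : ∀ w, d w = 0 := by
        intro w
        have := (Finset.sum_eq_zero_iff.1 h0) w (Finset.mem_univ w)
        exact pow_eq_zero_iff (by norm_num) |>.1 this
      have h1 : Wl r * Fintype.card V = 0 := by rw [← key1]; simp [this]
      rcases Nat.mul_eq_zero.1 h1 with h | h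
      · exact hpos.ne' h
      · exact Fintype.card_ne_zero h
    exact_mod_cast this
  have hDen : ∑ l ∈ Finset.range (r + 1),
      (Wl l : ℝ) * (Nat.card {p : V × V // α p.1 p.2 = l} : ℝ) =
      ((∑ w, (d w) ^ 2 : ℕ) : ℝ) := by
    rw [key2, key3]; push_cast; ring
  rw [hDen, div_le_iff₀ hDpos, hF]
  calc (Wl r : ℝ) ^ 2 * (Fintype.card V : ℝ) ^ 2
      = ((∑ w, d w : ℕ) : ℝ) ^ 2 := by rw [key1]; push_cast; ring
    _ ≤ (S.card : ℝ) * ((∑ w, (d w) ^ 2 : ℕ) : ℝ) := cauchy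
end

section
/- Fix integers 2 ≤ d ≤ n, a prime power q, and an integer S with 2 ≤ S ≤ q^n. The number of subsets C ⊆ F_q^n of cardinality S whose minimum Hamming distance is at most d−1 is at most (1/2) · q^n · (b − 1) · C(q^n − 2, S − 2), where b = Σ_{i=0}^{d−1} C(n,i)(q−1)^i. -/
/-- The size of the Hamming ball of radius `d - 1` in `F_q^n`. -/
def hammingBallSize (q n d : ℕ) : ℕ :=
  ∑ i ∈ Finset.range d, Nat.choose n i * (q - 1) ^ i

open Finset

/-- Card of functions on `s` avoiding a prescribed value at each point. -/
lemma diffSet_card {n : ℕ} {F : Type} [Fintype F] [DecidableEq F]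
    (x : Fin n → F) (s : Finset (Fin n)) :
    (univ.filter fun y : Fin n → F => (univ.filter fun j => x j ≠ y j) = s).card
      ≤ (Fintype.card F - 1) ^ s.card := by
  rw [← Fintype.card_subtype]
  have key : Fintype.card {y : Fin n → F // (univ.filter fun j => x j ≠ y j) = s}
      ≤ Fintype.card (∀ j : s, {a : F // a ≠ x j.1}) := by
    apply Fintype.card_le_of_injective
      (fun y => fun j => ⟨y.1 j.1, by
        have := y.2
        have hj : j.1 ∈ univ.filter fun j => x j ≠ y.1 j := by rw [this]; exact j.2
        simp only [mem_filter] at hj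
        exact fun h => hj.2 h.symm⟩)
    intro y z h
    ext j
    by_cases hj : j ∈ s
    · exact congrArg Subtype.val (congrFun h ⟨j, hj⟩)
    · have hy : j ∉ univ.filter fun i => x i ≠ y.1 i := by rw [y.2]; exact hj
      have hz : j ∉ univ.filter fun i => x i ≠ z.1 i := by rw [z.2]; exact hj
      simp only [mem_filter, mem_univ, true_and, not_not] at hy hz
      rw [← hy, ← hz]
  refine key.trans (le_of_eq ?_)
  rw [Fintype.card_pi]
  have h1 : ∀ j : s, Fintype.card {a : F // a ≠ x j.1} = Fintype.card F - 1 := by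
    intro j
    simp [Fintype.card_subtype_compl]
  rw [Finset.prod_congr rfl fun (j : s) _ => h1 j, Finset.prod_const,
    Finset.card_univ, Fintype.card_coe]

/-- Sphere cardinality bound. -/
lemma sphere_card {n : ℕ} {F : Type} [Fintype F] [DecidableEq F]
    (x : Fin n → F) (i : ℕ) :
    (univ.filter fun y : Fin n → F => hammingDist x y = i).card
      ≤ Nat.choose n i * (Fintype.card F - 1) ^ i := by
  classical
  have hfib : ∀ y ∈ univ.filter fun y : Fin n → F => hammingDist x y = i,
      (univ.filter fun j => x j ≠ y j) ∈ Finset.powersetCard i (univ : Finset (Fin n)) := by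
    intro y hy
    simp only [mem_filter, mem_univ, true_and] at hy
    rw [Finset.mem_powersetCard]
    exact ⟨Finset.subset_univ _, hy⟩
  rw [Finset.card_eq_sum_card_fiberwise hfib]
  calc ∑ s ∈ Finset.powersetCard i (univ : Finset (Fin n)),
        ((univ.filter fun y : Fin n → F => hammingDist x y = i).filter
          fun y => (univ.filter fun j => x j ≠ y j) = s).card
      ≤ ∑ s ∈ Finset.powersetCard i (univ : Finset (Fin n)), (Fintype.card F - 1) ^ i := by
        apply Finset.sum_le_sum
        intro s hs
        rw [Finset.mem_powersetCard] at hs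
        calc ((univ.filter fun y : Fin n → F => hammingDist x y = i).filter
              fun y => (univ.filter fun j => x j ≠ y j) = s).card
            ≤ (univ.filter fun y : Fin n → F =>
                (univ.filter fun j => x j ≠ y j) = s).card := by
              apply Finset.card_le_card
              intro y hy
              simp only [mem_filter] at hy ⊢
              exact ⟨mem_univ _, hy.2⟩
          _ ≤ (Fintype.card F - 1) ^ s.card := diffSet_card x s
          _ = (Fintype.card F - 1) ^ i := by rw [hs.2]
    _ = Nat.choose n i * (Fintype.card F - 1) ^ i := by
        rw [Finset.sum_const, Finset.card_powersetCard, Finset.card_univ,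
          Fintype.card_fin, smul_eq_mul]

/-- Hamming ball cardinality bound. -/
lemma ball_card {n d : ℕ} {F : Type} [Fintype F] [DecidableEq F]
    (x : Fin n → F) (hd : 1 ≤ d) :
    (univ.filter fun y : Fin n → F => hammingDist x y ≤ d - 1).card
      ≤ hammingBallSize (Fintype.card F) n d := by
  classical
  have hfib : ∀ y ∈ univ.filter fun y : Fin n → F => hammingDist x y ≤ d - 1,
      hammingDist x y ∈ Finset.range d := by
    intro y hy
    simp only [mem_filter, mem_univ, true_and] at hy
    rw [Finset.mem_range]
    omega
  rw [Finset.card_eq_sum_card_fiberwise hfib]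
  unfold hammingBallSize
  apply Finset.sum_le_sum
  intro i _
  calc ((univ.filter fun y : Fin n → F => hammingDist x y ≤ d - 1).filter
        fun y => hammingDist x y = i).card
      ≤ (univ.filter fun y : Fin n → F => hammingDist x y = i).card := by
        apply Finset.card_le_card
        intro y hy
        simp only [mem_filter] at hy ⊢
        exact ⟨mem_univ _, hy.2⟩
    _ ≤ Nat.choose n i * (Fintype.card F - 1) ^ i := sphere_card x i

/-- Number of `S`-subsets containing two fixed distinct points. -/
lemma codes_through_pair {V : Type} [Fintype V] [DecidableEq V] {x y : V}
    (hxy : x ≠ y) (S : ℕ) :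
    (univ.filter fun C : Finset V => C.card = S ∧ x ∈ C ∧ y ∈ C).card
      ≤ Nat.choose (Fintype.card V - 2) (S - 2) := by
  classical
  have htarget : (Finset.powersetCard (S - 2) (((univ : Finset V).erase x).erase y)).card
      = Nat.choose (Fintype.card V - 2) (S - 2) := by
    rw [Finset.card_powersetCard]
    congr 1
    rw [Finset.card_erase_of_mem (Finset.mem_erase.mpr ⟨hxy.symm, mem_univ _⟩),
      Finset.card_erase_of_mem (mem_univ _), Finset.card_univ]
    omega
  rw [← htarget]
  apply Finset.card_le_card_of_injOn (fun C => (C.erase x).erase y)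
  · intro C hC
    simp only [mem_coe, mem_filter, mem_univ, true_and] at hC
    obtain ⟨hcard, hx, hy⟩ := hC
    rw [Finset.mem_coe, Finset.mem_powersetCard]
    constructor
    · intro a ha
      simp only [Finset.mem_erase] at ha ⊢
      exact ⟨ha.1, ha.2.1, mem_univ _⟩
    · rw [Finset.card_erase_of_mem (Finset.mem_erase.mpr ⟨hxy.symm, hy⟩),
        Finset.card_erase_of_mem hx, hcard]
      omega
  · intro C hC D hD h
    simp only [mem_coe, mem_filter, mem_univ, true_and] at hC hD
    have hCx : x ∈ C := hC.2.1
    have hCy : y ∈ C := hC.2.2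
    have hDx : x ∈ D := hD.2.1
    have hDy : y ∈ D := hD.2.2
    have : insert x (insert y ((C.erase x).erase y))
        = insert x (insert y ((D.erase x).erase y)) := by
      rw [show (C.erase x).erase y = (D.erase x).erase y from h]
    rwa [Finset.insert_erase (Finset.mem_erase.mpr ⟨hxy.symm, hCy⟩),
      Finset.insert_erase hCx,
      Finset.insert_erase (Finset.mem_erase.mpr ⟨hxy.symm, hDy⟩),
      Finset.insert_erase hDx] at this

/-- The number of codes `C ⊆ F_q^n` of cardinality `S` and minimum Hamming
distance at most `d - 1` is at most `(1/2) q^n (b - 1) C(q^n - 2, S - 2)`.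
(Stated multiplied by 2 to stay in `ℕ`.) -/
theorem stmt_3 (q n d S : ℕ) (hq : IsPrimePow q) (hd : 2 ≤ d) (hdn : d ≤ n)
    (hS : 2 ≤ S) (hSq : S ≤ q ^ n)
    (F : Type) [Field F] [Fintype F] [DecidableEq F] (hF : Fintype.card F = q) :
    2 * Nat.card {C : Finset (Fin n → F) // C.card = S ∧
        ∃ x ∈ C, ∃ y ∈ C, x ≠ y ∧ hammingDist x y ≤ d - 1}
      ≤ q ^ n * (hammingBallSize q n d - 1) * Nat.choose (q ^ n - 2) (S - 2) := by
  classical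
  have hcardV : Fintype.card (Fin n → F) = q ^ n := by
    rw [Fintype.card_fun, hF, Fintype.card_fin]
  -- convert Nat.card to a Finset.card
  set Bad : Finset (Finset (Fin n → F)) := univ.filter (fun C => C.card = S ∧
      ∃ x ∈ C, ∃ y ∈ C, x ≠ y ∧ hammingDist x y ≤ d - 1) with hBad
  have hnat : Nat.card {C : Finset (Fin n → F) // C.card = S ∧
      ∃ x ∈ C, ∃ y ∈ C, x ≠ y ∧ hammingDist x y ≤ d - 1} = Bad.card := by
    rw [Nat.card_eq_fintype_card, Fintype.card_subtype]
  rw [hnat]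
  -- the incidence set
  set T : Finset (Finset (Fin n → F) × ((Fin n → F) × (Fin n → F))) := univ.filter (fun t =>
      t.1.card = S ∧ t.2.1 ≠ t.2.2 ∧ hammingDist t.2.1 t.2.2 ≤ d - 1 ∧
      t.2.1 ∈ t.1 ∧ t.2.2 ∈ t.1) with hT
  set P : Finset ((Fin n → F) × (Fin n → F)) := univ.filter (fun p =>
      p.1 ≠ p.2 ∧ hammingDist p.1 p.2 ≤ d - 1) with hP
  -- Step A : 2 * Bad.card ≤ T.card
  have stepA : 2 * Bad.card ≤ T.card := by
    have hfib : ∀ t ∈ T, t.1 ∈ Bad := by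
      intro t ht
      simp only [hT, mem_filter, mem_univ, true_and] at ht
      simp only [hBad, mem_filter, mem_univ, true_and]
      exact ⟨ht.1, t.2.1, ht.2.2.2.1, t.2.2, ht.2.2.2.2, ht.2.1, ht.2.2.1⟩
    rw [Finset.card_eq_sum_card_fiberwise hfib]
    have : ∀ C ∈ Bad, 2 ≤ (T.filter fun t => t.1 = C).card := by
      intro C hC
      simp only [hBad, mem_filter, mem_univ, true_and] at hC
      obtain ⟨hcard, x, hx, y, hy, hxy, hdist⟩ := hC
      have h1 : (C, (x, y)) ∈ T.filter fun t => t.1 = C := by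
        simp only [hT, mem_filter, mem_univ, true_and]
        exact ⟨⟨hcard, hxy, hdist, hx, hy⟩, trivial⟩
      have h2 : (C, (y, x)) ∈ T.filter fun t => t.1 = C := by
        simp only [hT, mem_filter, mem_univ, true_and]
        exact ⟨⟨hcard, hxy.symm, by rwa [hammingDist_comm], hy, hx⟩, trivial⟩
      have hpair : ({(C, (x, y)), (C, (y, x))} : Finset (Finset (Fin n → F) × ((Fin n → F) × (Fin n → F))))
          ⊆ T.filter fun t => t.1 = C := by
        intro a ha
        simp only [Finset.mem_insert, Finset.mem_singleton] at ha
        rcases ha with rfl | rfl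
        · exact h1
        · exact h2
      calc 2 = ({(C, (x, y)), (C, (y, x))} : Finset (Finset (Fin n → F) × ((Fin n → F) × (Fin n → F)))).card := by
              rw [Finset.card_insert_of_notMem, Finset.card_singleton]
              simp only [Finset.mem_singleton]
              intro hcontra
              rw [Prod.mk.injEq, Prod.mk.injEq] at hcontra
              exact hxy hcontra.2.1
        _ ≤ _ := Finset.card_le_card hpair
    calc 2 * Bad.card = ∑ _C ∈ Bad, 2 := by rw [Finset.sum_const, smul_eq_mul, mul_comm]
      _ ≤ ∑ C ∈ Bad, (T.filter fun t => t.1 = C).card := Finset.sum_le_sum this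
  -- Step B : T.card ≤ P.card * choose
  have stepB : T.card ≤ P.card * Nat.choose (q ^ n - 2) (S - 2) := by
    have hfib : ∀ t ∈ T, t.2 ∈ P := by
      intro t ht
      simp only [hT, mem_filter, mem_univ, true_and] at ht
      simp only [hP, mem_filter, mem_univ, true_and]
      exact ⟨ht.2.1, ht.2.2.1⟩
    rw [Finset.card_eq_sum_card_fiberwise hfib]
    calc ∑ p ∈ P, (T.filter fun t => t.2 = p).card
        ≤ ∑ p ∈ P, Nat.choose (q ^ n - 2) (S - 2) := by
          apply Finset.sum_le_sum
          intro p hp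
          simp only [hP, mem_filter, mem_univ, true_and] at hp
          have hinj : (T.filter fun t => t.2 = p).card
              ≤ (univ.filter fun C : Finset (Fin n → F) => C.card = S ∧ p.1 ∈ C ∧ p.2 ∈ C).card := by
            apply Finset.card_le_card_of_injOn (fun t => t.1)
            · intro t ht
              simp only [hT, mem_coe, mem_filter, mem_univ, true_and] at ht
              obtain ⟨⟨hcard, _, _, hm1, hm2⟩, hsnd⟩ := ht
              simp only [mem_coe, mem_filter, mem_univ, true_and]
              exact ⟨hcard, hsnd ▸ hm1, hsnd ▸ hm2⟩
            · intro a ha b hb hab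
              simp only [mem_coe, mem_filter] at ha hb
              exact Prod.ext hab (ha.2.trans hb.2.symm)
          refine hinj.trans ?_
          have := codes_through_pair (V := (Fin n → F)) hp.1 S
          rwa [hcardV] at this
      _ = P.card * Nat.choose (q ^ n - 2) (S - 2) := by
          rw [Finset.sum_const, smul_eq_mul]
  -- Step C : P.card ≤ q^n * (b - 1)
  have stepC : P.card ≤ q ^ n * (hammingBallSize q n d - 1) := by
    have hfib : ∀ p ∈ P, p.1 ∈ (univ : Finset (Fin n → F)) := fun p _ => mem_univ _
    rw [Finset.card_eq_sum_card_fiberwise hfib]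
    calc ∑ x ∈ (univ : Finset (Fin n → F)), (P.filter fun p => p.1 = x).card
        ≤ ∑ _x ∈ (univ : Finset (Fin n → F)), (hammingBallSize q n d - 1) := by
          apply Finset.sum_le_sum
          intro x _
          have hinj : (P.filter fun p => p.1 = x).card
              ≤ ((univ.filter fun y : Fin n → F => hammingDist x y ≤ d - 1).erase x).card := by
            apply Finset.card_le_card_of_injOn (fun p => p.2)
            · intro p hp
              simp only [hP, mem_coe, mem_filter, mem_univ, true_and] at hp
              obtain ⟨⟨hne, hdist⟩, hfst⟩ := hp
              rw [Finset.mem_coe, Finset.mem_erase]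
              refine ⟨?_, ?_⟩
              · rw [← hfst]; exact hne.symm
              · simp only [mem_filter, mem_univ, true_and]
                rw [← hfst]; exact hdist
            · intro a ha b hb hab
              simp only [mem_coe, mem_filter] at ha hb
              exact Prod.ext (ha.2.trans hb.2.symm) hab
          refine hinj.trans ?_
          rw [Finset.card_erase_of_mem]
          · have hball := ball_card (d := d) x (by omega)
            rw [hF] at hball
            omega
          · simp only [mem_filter, mem_univ, true_and, hammingDist_self]
            omega
      _ = q ^ n * (hammingBallSize q n d - 1) := by
          rw [Finset.sum_const, smul_eq_mul, Finset.card_univ, hcardV]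
  calc 2 * Bad.card ≤ T.card := stepA
    _ ≤ P.card * Nat.choose (q ^ n - 2) (S - 2) := stepB
    _ ≤ q ^ n * (hammingBallSize q n d - 1) * Nat.choose (q ^ n - 2) (S - 2) :=
        Nat.mul_le_mul_right _ stepC
end

section
/- Fix integers 2 ≤ d ≤ n, a prime power q, and 2 ≤ S ≤ q^n. Let b be the size of the Hamming ball of radius d−1 in F_q^n. Then the proportion δ of codes C ⊆ F_q^n with |C| = S and minimum Hamming distance ≥ d, among all subsets of F_q^n of cardinality S, satisfies δ ≥ 1 − (b−1)·S·(S−1) / (2·(q^n − 1)). -/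
/-- The density of codes in `F_q^n` of cardinality `S` and minimum Hamming distance at least
`d`, among all subsets of `F_q^n` of cardinality `S`. -/
noncomputable def densityH (F : Type) [Fintype F] [DecidableEq F] (n S d : ℕ) : ℝ :=
  (Nat.card {C : Finset (Fin n → F) // C.card = S ∧
      ∀ x ∈ C, ∀ y ∈ C, x ≠ y → d ≤ hammingDist x y} : ℝ) /
  (Nat.card {C : Finset (Fin n → F) // C.card = S} : ℝ)

open Finset

section aux

variable {n : ℕ} {F : Type} [Fintype F] [DecidableEq F]

lemma support_count (x : Fin n → F) (s : Finset (Fin n)) :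
    (univ.filter (fun y : Fin n → F => ∀ j, y j ≠ x j ↔ j ∈ s)).card
      = (Fintype.card F - 1) ^ s.card := by
  rw [← Fintype.card_subtype]
  rw [Fintype.card_congr (Equiv.subtypePiEquivPi (p := fun j (b : F) => b ≠ x j ↔ j ∈ s))]
  rw [Fintype.card_pi]
  have h1 : ∀ j : Fin n, Fintype.card {b : F // b ≠ x j ↔ j ∈ s}
      = if j ∈ s then Fintype.card F - 1 else 1 := by
    intro j
    by_cases h : j ∈ s
    · simp only [h, if_true]
      rw [Fintype.card_congr (Equiv.subtypeEquivRight (q := fun b : F => b ≠ x j)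
        (fun b => by simp [h]))]
      rw [Fintype.card_subtype]
      rw [show (univ.filter (fun b : F => b ≠ x j)) = univ.erase (x j) by
        ext b; simp [mem_erase]]
      rw [card_erase_of_mem (mem_univ _), Finset.card_univ]
    · simp only [h, if_false]
      rw [Fintype.card_congr (Equiv.subtypeEquivRight (q := fun b : F => b = x j)
        (fun b => by simp [h]))]
      exact Fintype.card_subtype_eq _
  calc ∏ j, Fintype.card {b : F // b ≠ x j ↔ j ∈ s}
      = ∏ j, (if j ∈ s then Fintype.card F - 1 else 1) :=
        Finset.prod_congr rfl (fun j _ => h1 j)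
    _ = ∏ _j ∈ s, (Fintype.card F - 1) := by
        rw [Finset.prod_ite_mem, Finset.univ_inter]
    _ = (Fintype.card F - 1) ^ s.card := Finset.prod_const _

lemma sphere_count (x : Fin n → F) (i : ℕ) :
    (univ.filter (fun y : Fin n → F => hammingDist x y = i)).card
      = n.choose i * (Fintype.card F - 1) ^ i := by
  have key : (univ.filter (fun y : Fin n → F => hammingDist x y = i))
      = (Finset.powersetCard i (univ : Finset (Fin n))).biUnion
          (fun s => univ.filter (fun y : Fin n → F => ∀ j, y j ≠ x j ↔ j ∈ s)) := by
    ext y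
    simp only [mem_filter, mem_univ, true_and, mem_biUnion, mem_powersetCard, subset_univ]
    constructor
    · intro h
      refine ⟨univ.filter (fun j => y j ≠ x j), ?_, fun j => by simp⟩
      rw [← h]
      show _ = (univ.filter (fun j => x j ≠ y j)).card
      congr 1
      ext j
      simp [ne_comm]
    · rintro ⟨s, hcard, hy⟩
      have : (univ.filter (fun j => x j ≠ y j)) = s := by
        ext j
        simp only [mem_filter, mem_univ, true_and]
        rw [← hy j]
        exact ne_comm
      show (univ.filter (fun j => x j ≠ y j)).card = i
      rw [this, hcard]
  rw [key, card_biUnion]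
  · rw [Finset.sum_congr rfl (fun s _ => support_count x s),
      Finset.sum_congr rfl (fun s hs => by rw [(mem_powersetCard.mp hs).2]),
      sum_const, card_powersetCard, card_univ, Fintype.card_fin, smul_eq_mul]
  · intro s hs t ht hst
    simp only [disjoint_left, mem_filter, mem_univ, true_and]
    rintro y hy hy'
    exact hst (by ext j; exact (hy j).symm.trans (hy' j))

lemma ball_count (x : Fin n → F) (d : ℕ) :
    (univ.filter (fun y : Fin n → F => hammingDist x y < d)).card
      = ∑ i ∈ Finset.range d, n.choose i * (Fintype.card F - 1) ^ i := by
  have key : (univ.filter (fun y : Fin n → F => hammingDist x y < d))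
      = (Finset.range d).biUnion
          (fun i => univ.filter (fun y : Fin n → F => hammingDist x y = i)) := by
    ext y
    simp only [mem_filter, mem_univ, true_and, mem_biUnion, mem_range]
    constructor
    · intro h; exact ⟨_, h, rfl⟩
    · rintro ⟨i, hi, rfl⟩; exact hi
  rw [key, card_biUnion]
  · exact Finset.sum_congr rfl (fun i _ => sphere_count x i)
  · intro i _ j _ hij
    simp only [disjoint_left, mem_filter, mem_univ, true_and]
    rintro y h1 h2
    exact hij (h1.symm.trans h2)

lemma pair_subsets {V : Type} [Fintype V] [DecidableEq V] (S : ℕ) (hS : 2 ≤ S)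
    (x y : V) (hxy : x ≠ y) :
    ((Finset.powersetCard S (univ : Finset V)).filter (fun C => x ∈ C ∧ y ∈ C)).card
      = (Fintype.card V - 2).choose (S - 2) := by
  have hyx : y ∈ univ.erase x := mem_erase.mpr ⟨hxy.symm, mem_univ _⟩
  have hcard : ((univ.erase x).erase y).card = Fintype.card V - 2 := by
    rw [card_erase_of_mem (mem_erase.mpr ⟨hxy.symm, mem_univ _⟩),
      card_erase_of_mem (mem_univ x), card_univ]
    omega
  rw [← hcard, ← Finset.card_powersetCard]
  refine Finset.card_bij' (fun C _ => (C.erase x).erase y)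
    (fun D _ => insert x (insert y D)) ?_ ?_ ?_ ?_
  · rintro C hC
    simp only [mem_filter, mem_powersetCard] at hC
    obtain ⟨⟨-, hCS⟩, hxC, hyC⟩ := hC
    rw [mem_powersetCard]
    refine ⟨erase_subset_erase y (erase_subset_erase x (subset_univ C)), ?_⟩
    rw [card_erase_of_mem (mem_erase.mpr ⟨hxy.symm, hyC⟩), card_erase_of_mem hxC, hCS]
    omega
  · rintro D hD
    rw [mem_powersetCard] at hD
    obtain ⟨hsub, hDcard⟩ := hD
    have hyD : y ∉ D := fun h => (mem_erase.mp (hsub h)).1 rfl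
    have hxD : x ∉ D := fun h => (mem_erase.mp (mem_of_mem_erase (hsub h))).1 rfl
    have hxyD : x ∉ insert y D := by simp [hxy, hxD]
    simp only [mem_filter, mem_powersetCard]
    refine ⟨⟨subset_univ _, ?_⟩, mem_insert_self _ _, mem_insert_of_mem (mem_insert_self _ _)⟩
    rw [card_insert_of_notMem hxyD, card_insert_of_notMem hyD, hDcard]
    omega
  · rintro C hC
    simp only [mem_filter, mem_powersetCard] at hC
    obtain ⟨⟨-, hCS⟩, hxC, hyC⟩ := hC
    show insert x (insert y ((C.erase x).erase y)) = C
    rw [Finset.insert_erase (mem_erase.mpr ⟨hxy.symm, hyC⟩), Finset.insert_erase hxC]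
  · rintro D hD
    rw [mem_powersetCard] at hD
    obtain ⟨hsub, hDcard⟩ := hD
    have hyD : y ∉ D := fun h => (mem_erase.mp (hsub h)).1 rfl
    have hxD : x ∉ D := fun h => (mem_erase.mp (mem_of_mem_erase (hsub h))).1 rfl
    have hxyD : x ∉ insert y D := by simp [hxy, hxD]
    show ((insert x (insert y D)).erase x).erase y = D
    rw [Finset.erase_insert hxyD, Finset.erase_insert hyD]

end aux


lemma choose_pair_identity (N S : ℕ) (hS : 2 ≤ S) (hSN : S ≤ N) :
    N * (N - 1) * (N - 2).choose (S - 2) = N.choose S * (S * (S - 1)) := by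
  obtain ⟨N2, rfl⟩ : ∃ N2, N = N2 + 2 := ⟨N - 2, by omega⟩
  obtain ⟨S2, rfl⟩ : ∃ S2, S = S2 + 2 := ⟨S - 2, by omega⟩
  have e1 := Nat.add_one_mul_choose_eq N2 S2
  have e2 := Nat.add_one_mul_choose_eq (N2 + 1) (S2 + 1)
  simp only [Nat.add_assoc, Nat.reduceAdd] at e2
  have hM' : (N2 + 2 - 2).choose (S2 + 2 - 2) = N2.choose S2 := by norm_num
  rw [hM']
  have r1 : N2 + 2 - 1 = N2 + 1 := by omega
  have r2 : S2 + 2 - 1 = S2 + 1 := by omega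
  rw [r1, r2]
  have h3 : (N2 + 2) * ((N2 + 1) * N2.choose S2)
      = (N2 + 2) * ((N2 + 1).choose (S2 + 1) * (S2 + 1)) := by rw [e1]
  calc (N2 + 2) * (N2 + 1) * N2.choose S2
      = (N2 + 2) * ((N2 + 1) * N2.choose S2) := by ring
    _ = (N2 + 2) * ((N2 + 1).choose (S2 + 1) * (S2 + 1)) := h3
    _ = ((N2 + 2) * (N2 + 1).choose (S2 + 1)) * (S2 + 1) := by ring
    _ = ((N2 + 2).choose (S2 + 2) * (S2 + 2)) * (S2 + 1) := by rw [e2]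
    _ = (N2 + 2).choose (S2 + 2) * ((S2 + 2) * (S2 + 1)) := by ring

/-- `δ ≥ 1 - (b-1) S (S-1) / (2 (q^n - 1))`. -/
theorem stmt_4 (q n d S : ℕ) (hq : IsPrimePow q) (hd : 2 ≤ d) (hdn : d ≤ n)
    (hS : 2 ≤ S) (hSq : S ≤ q ^ n)
    (F : Type) [Field F] [Fintype F] [DecidableEq F] (hF : Fintype.card F = q) :
    densityH F n S d ≥
      1 - ((hammingBallSize q n d : ℝ) - 1) * S * (S - 1) / (2 * ((q : ℝ) ^ n - 1)) := by
  classical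
  have hN : Fintype.card (Fin n → F) = q ^ n := by
    rw [Fintype.card_fun, hF, Fintype.card_fin]
  set N := q ^ n with hNdef
  set b := hammingBallSize q n d with hbdef
  have hb1 : 1 ≤ b := by
    have h0 : (0 : ℕ) ∈ Finset.range d := by simp; omega
    have h2 : n.choose 0 * (q - 1) ^ 0 ≤ b := by
      rw [hbdef, hammingBallSize]
      exact Finset.single_le_sum (f := fun i => n.choose i * (q - 1) ^ i)
        (fun i _ => Nat.zero_le _) h0
    simpa using h2
  have hN2 : 2 ≤ N := le_trans hS hSq
  set T : Finset (Finset (Fin n → F)) := Finset.powersetCard S Finset.univ with hTdef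
  set good : Finset (Fin n → F) → Prop :=
    fun C => ∀ x ∈ C, ∀ y ∈ C, x ≠ y → d ≤ hammingDist x y with hgood
  set G := T.filter good with hGdef
  set B := T.filter (fun C => ¬ good C) with hBdef
  have hTcard : T.card = N.choose S := by
    rw [hTdef, Finset.card_powersetCard, card_univ, hN]
  have hGB : G.card + B.card = T.card :=
    Finset.card_filter_add_card_filter_not good
  -- ball count in terms of b
  have hball : ∀ x : Fin n → F,
      (univ.filter (fun y : Fin n → F => hammingDist x y < d)).card = b := by
    intro x
    rw [ball_count, hbdef, hammingBallSize, hF]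
  -- bad pairs
  set P : Finset ((Fin n → F) × (Fin n → F)) :=
    Finset.univ.filter (fun p => p.1 ≠ p.2 ∧ hammingDist p.1 p.2 < d) with hPdef
  have hP : P.card ≤ N * (b - 1) := by
    rw [Finset.card_eq_sum_card_fiberwise (f := Prod.fst) (t := univ) (fun p _ => mem_univ _)]
    have hfiber : ∀ x : Fin n → F, (P.filter (fun p => p.1 = x)).card ≤ b - 1 := by
      intro x
      have himg : (P.filter (fun p => p.1 = x)).card
          = ((univ.filter (fun y : Fin n → F => hammingDist x y < d)).erase x).card := by
        refine Finset.card_bij' (fun p _ => p.2) (fun y _ => (x, y)) ?_ ?_ ?_ ?_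
        · rintro ⟨a, y⟩ hp
          simp only [hPdef, mem_filter, mem_univ, true_and] at hp
          obtain ⟨⟨h1, h2⟩, h3⟩ := hp
          subst h3
          simp only [mem_erase, mem_filter, mem_univ, true_and]
          exact ⟨fun h => h1 h.symm, h2⟩
        · rintro y hy
          simp only [mem_erase, mem_filter, mem_univ, true_and] at hy
          simp only [hPdef, mem_filter, mem_univ, true_and]
          exact ⟨⟨fun h => hy.1 h.symm, hy.2⟩, by trivial⟩
        · rintro ⟨a, y⟩ hp
          simp only [hPdef, mem_filter, mem_univ, true_and] at hp
          obtain ⟨-, h3⟩ := hp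
          simp [h3]
        · rintro y _
          rfl
      rw [himg, card_erase_of_mem (by simp [mem_filter]; omega), hball x]
    calc ∑ x : Fin n → F, (P.filter (fun p => p.1 = x)).card
        ≤ ∑ _x : Fin n → F, (b - 1) := Finset.sum_le_sum (fun x _ => hfiber x)
      _ = N * (b - 1) := by rw [sum_const, smul_eq_mul, card_univ, hN]
  -- double counting
  set M := (N - 2).choose (S - 2) with hMdef
  have hpair : ∀ p ∈ P, (T.filter (fun C => p.1 ∈ C ∧ p.2 ∈ C)).card = M := by
    intro p hp
    simp only [hPdef, mem_filter, mem_univ, true_and] at hp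
    rw [hTdef, pair_subsets S hS p.1 p.2 hp.1, hN]
  have hBcount : 2 * B.card ≤ P.card * M := by
    have h1 : ∀ C ∈ B, 2 ≤ (P.filter (fun p => p.1 ∈ C ∧ p.2 ∈ C)).card := by
      intro C hC
      simp only [hBdef, mem_filter, hgood] at hC
      obtain ⟨hCT, hbad⟩ := hC
      push_neg at hbad
      obtain ⟨x, hx, y, hy, hxy, hlt⟩ := hbad
      have hsub : ({(x, y), (y, x)} : Finset ((Fin n → F) × (Fin n → F)))
          ⊆ P.filter (fun p => p.1 ∈ C ∧ p.2 ∈ C) := by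
        intro p hp
        simp only [mem_insert, mem_singleton] at hp
        rcases hp with rfl | rfl
        · simp only [hPdef, mem_filter, mem_univ, true_and]
          exact ⟨⟨hxy, hlt⟩, hx, hy⟩
        · simp only [hPdef, mem_filter, mem_univ, true_and]
          exact ⟨⟨hxy.symm, by rwa [hammingDist_comm]⟩, hy, hx⟩
      have hne : ((x, y) : (Fin n → F) × (Fin n → F)) ≠ (y, x) := by
        intro h
        exact hxy (congrArg Prod.fst h)
      calc 2 = ({(x, y), (y, x)} : Finset ((Fin n → F) × (Fin n → F))).card :=
            (Finset.card_pair hne).symm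
        _ ≤ _ := card_le_card hsub
    calc 2 * B.card = ∑ _C ∈ B, 2 := by rw [sum_const, smul_eq_mul, mul_comm]
      _ ≤ ∑ C ∈ B, (P.filter (fun p => p.1 ∈ C ∧ p.2 ∈ C)).card := Finset.sum_le_sum h1
      _ = ∑ C ∈ B, ∑ p ∈ P, if p.1 ∈ C ∧ p.2 ∈ C then 1 else 0 := by
          exact Finset.sum_congr rfl (fun C _ => Finset.card_filter _ _)
      _ = ∑ p ∈ P, ∑ C ∈ B, if p.1 ∈ C ∧ p.2 ∈ C then 1 else 0 := Finset.sum_comm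
      _ = ∑ p ∈ P, (B.filter (fun C => p.1 ∈ C ∧ p.2 ∈ C)).card := by
          exact Finset.sum_congr rfl (fun p _ => (Finset.card_filter _ _).symm)
      _ ≤ ∑ p ∈ P, (T.filter (fun C => p.1 ∈ C ∧ p.2 ∈ C)).card :=
          Finset.sum_le_sum (fun p _ => card_le_card
            (Finset.filter_subset_filter _ (Finset.filter_subset _ _)))
      _ = ∑ p ∈ P, M := Finset.sum_congr rfl hpair
      _ = P.card * M := by rw [sum_const, smul_eq_mul]
  -- choose identity
  have hid : N * (N - 1) * M = N.choose S * (S * (S - 1)) := by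
    rw [hMdef]
    exact choose_pair_identity N S hS hSq
  -- the main nat inequality
  have hmain : 2 * B.card * (N - 1) ≤ (b - 1) * (S * (S - 1)) * T.card := by
    calc 2 * B.card * (N - 1) ≤ (N * (b - 1) * M) * (N - 1) :=
          Nat.mul_le_mul_right _ (le_trans hBcount (Nat.mul_le_mul_right _ hP))
      _ = (b - 1) * (N * (N - 1) * M) := by ring
      _ = (b - 1) * (N.choose S * (S * (S - 1))) := by rw [hid]
      _ = (b - 1) * (S * (S - 1)) * T.card := by rw [hTcard]; ring
  -- identify the Nat.cards
  have hden_bot : Nat.card {C : Finset (Fin n → F) // C.card = S} = T.card := by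
    rw [Nat.card_eq_fintype_card, Fintype.card_finset_len, hN, hTcard]
  have hden_top : Nat.card {C : Finset (Fin n → F) // C.card = S ∧
      ∀ x ∈ C, ∀ y ∈ C, x ≠ y → d ≤ hammingDist x y} = G.card := by
    rw [Nat.card_eq_fintype_card, Fintype.card_subtype]
    congr 1
    ext C
    simp only [mem_filter, mem_univ, true_and, hGdef, hTdef, mem_powersetCard, subset_univ,
      hgood, true_and]
  -- real arithmetic
  have hT0 : 0 < T.card := by rw [hTcard]; exact Nat.choose_pos hSq
  have hTR : (0 : ℝ) < (T.card : ℝ) := by exact_mod_cast hT0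
  have hNR : ((q : ℝ)) ^ n = (N : ℝ) := by rw [hNdef]; push_cast; ring
  have hNR1 : (0 : ℝ) < (N : ℝ) - 1 := by
    have : (2 : ℝ) ≤ (N : ℝ) := by exact_mod_cast hN2
    linarith
  rw [densityH, hden_top, hden_bot]
  have hGR : (G.card : ℝ) = (T.card : ℝ) - (B.card : ℝ) := by
    have := hGB
    push_cast [← this]
    ring
  have hcast : 2 * (B.card : ℝ) * ((N : ℝ) - 1) ≤ ((b : ℝ) - 1) * (S * ((S : ℝ) - 1)) * (T.card : ℝ) := by
    have h1 : ((2 * B.card * (N - 1) : ℕ) : ℝ) ≤ (((b - 1) * (S * (S - 1)) * T.card : ℕ) : ℝ) := by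
      exact_mod_cast hmain
    push_cast [Nat.cast_sub hb1, Nat.cast_sub (le_trans one_le_two hN2),
      Nat.cast_sub (le_trans one_le_two hS)] at h1
    convert h1 using 1 <;> ring
  have hkey : (B.card : ℝ) / (T.card : ℝ)
      ≤ ((b : ℝ) - 1) * S * ((S : ℝ) - 1) / (2 * ((N : ℝ) - 1)) := by
    rw [div_le_div_iff₀ hTR (by linarith)]
    calc (B.card : ℝ) * (2 * ((N : ℝ) - 1)) = 2 * (B.card : ℝ) * ((N : ℝ) - 1) := by ring
      _ ≤ ((b : ℝ) - 1) * (S * ((S : ℝ) - 1)) * (T.card : ℝ) := hcast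
      _ = ((b : ℝ) - 1) * S * ((S : ℝ) - 1) * (T.card : ℝ) := by ring
  rw [hGR, sub_div, div_self (ne_of_gt hTR), hNR]
  have := sub_le_sub_left hkey 1
  linarith
end

section
/- Fix integers 2 ≤ d ≤ n and for each prime power q let S_q ≥ 2 be an integer. If S_q ∈ o(q^{(n−d+1)/2}) as q → ∞ (through prime powers), then the proportion of subsets of F_q^n of cardinality S_q having minimum Hamming distance at least d tends to 1 as q → ∞. -/
open Filter Asymptotics

/-- The filter of prime powers tending to infinity. -/
def primePowFilter : Filter ℕ := Filter.atTop ⊓ Filter.principal {q | IsPrimePow q}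

section Aux
open Finset

lemma ball_card_le {F : Type*} [Fintype F] [DecidableEq F] (hF : 1 ≤ Fintype.card F)
    (n d : ℕ) (x : Fin n → F) :
    (univ.filter fun y : Fin n → F => hammingDist x y < d).card
      ≤ 2 ^ n * Fintype.card F ^ (d - 1) := by
  classical
  have hsub : (univ.filter fun y : Fin n → F => hammingDist x y < d) ⊆
      (univ.filter fun s : Finset (Fin n) => s.card < d).biUnion
        (fun s => univ.filter fun y : Fin n → F => ∀ i ∉ s, y i = x i) := by
    intro y hy
    simp only [mem_filter, mem_univ, true_and] at hy
    refine mem_biUnion.2 ⟨univ.filter fun i => x i ≠ y i, ?_, ?_⟩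
    · simpa [hammingDist] using hy
    · simp only [mem_filter, mem_univ, true_and, not_not]
      intro i hi
      exact hi.symm
  refine ((card_le_card hsub).trans card_biUnion_le).trans ?_
  have hbound : ∀ s ∈ univ.filter (fun s : Finset (Fin n) => s.card < d),
      (univ.filter fun y : Fin n → F => ∀ i ∉ s, y i = x i).card
        ≤ Fintype.card F ^ (d - 1) := by
    intro s hs
    simp only [mem_filter, mem_univ, true_and] at hs
    have h1 : (univ.filter fun y : Fin n → F => ∀ i ∉ s, y i = x i).card
        ≤ (univ : Finset (↥s → F)).card := by
      refine Finset.card_le_card_of_injOn (fun (y : Fin n → F) => fun i : ↥s => y i)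
        (fun y _ => mem_univ _) ?_
      intro y hy z hz h
      simp only [coe_filter, Set.mem_setOf_eq, mem_univ, true_and] at hy hz
      funext i
      by_cases hi : i ∈ s
      · exact congrFun h ⟨i, hi⟩
      · rw [hy i hi, hz i hi]
    have h2 : (univ : Finset (↥s → F)).card ≤ Fintype.card F ^ s.card := by
      rw [card_univ, Fintype.card_fun, Fintype.card_coe]
    refine h1.trans (h2.trans ?_)
    exact Nat.pow_le_pow_right hF (Nat.le_sub_one_of_lt hs)
  calc ∑ s ∈ univ.filter (fun s : Finset (Fin n) => s.card < d),
        (univ.filter fun y : Fin n → F => ∀ i ∉ s, y i = x i).card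
      ≤ ∑ _s ∈ univ.filter (fun s : Finset (Fin n) => s.card < d),
          Fintype.card F ^ (d - 1) := Finset.sum_le_sum hbound
    _ = (univ.filter (fun s : Finset (Fin n) => s.card < d)).card
          * Fintype.card F ^ (d - 1) := by rw [Finset.sum_const, smul_eq_mul]
    _ ≤ 2 ^ n * Fintype.card F ^ (d - 1) := by
        gcongr
        calc (univ.filter (fun s : Finset (Fin n) => s.card < d)).card
            ≤ (univ : Finset (Finset (Fin n))).card := card_filter_le _ _
          _ = 2 ^ n := by simp [card_univ]

lemma pairs_card_le {F : Type*} [Fintype F] [DecidableEq F] (hF : 1 ≤ Fintype.card F)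
    (n d : ℕ) :
    ((univ : Finset ((Fin n → F) × (Fin n → F))).filter
        (fun p => p.1 ≠ p.2 ∧ hammingDist p.1 p.2 < d)).card
      ≤ Fintype.card F ^ n * (2 ^ n * Fintype.card F ^ (d - 1)) := by
  classical
  have hsub : ((univ : Finset ((Fin n → F) × (Fin n → F))).filter
        (fun p => p.1 ≠ p.2 ∧ hammingDist p.1 p.2 < d)) ⊆
      (univ : Finset (Fin n → F)).biUnion
        (fun x => (univ.filter fun y : Fin n → F => hammingDist x y < d).image
          (fun y => (x, y))) := by
    intro p hp
    simp only [mem_filter, mem_univ, true_and] at hp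
    refine mem_biUnion.2 ⟨p.1, mem_univ _, ?_⟩
    refine mem_image.2 ⟨p.2, ?_, rfl⟩
    exact mem_filter.2 ⟨mem_univ _, hp.2⟩
  refine ((card_le_card hsub).trans card_biUnion_le).trans ?_
  calc ∑ x ∈ (univ : Finset (Fin n → F)),
        ((univ.filter fun y : Fin n → F => hammingDist x y < d).image (fun y => (x, y))).card
      ≤ ∑ _x ∈ (univ : Finset (Fin n → F)), 2 ^ n * Fintype.card F ^ (d - 1) := by
        refine Finset.sum_le_sum fun x _ => ?_
        exact (Finset.card_image_le).trans (ball_card_le hF n d x)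
    _ = Fintype.card (Fin n → F) * (2 ^ n * Fintype.card F ^ (d - 1)) := by
        rw [Finset.sum_const, smul_eq_mul, card_univ]
    _ = Fintype.card F ^ n * (2 ^ n * Fintype.card F ^ (d - 1)) := by
        rw [Fintype.card_fun, Fintype.card_fin]

lemma fixedpair_card_le {α : Type*} [Fintype α] [DecidableEq α] (S : ℕ) {x y : α}
    (hxy : x ≠ y) :
    (univ.filter (fun C : Finset α => C.card = S ∧ x ∈ C ∧ y ∈ C)).card
      ≤ (Fintype.card α - 2).choose (S - 2) := by
  classical
  have key : (univ.filter (fun C : Finset α => C.card = S ∧ x ∈ C ∧ y ∈ C)).card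
      ≤ (Finset.powersetCard (S - 2) ((univ : Finset α) \ {x, y})).card := by
    refine Finset.card_le_card_of_injOn (fun C => (C.erase x).erase y) ?_ ?_
    · intro C hC
      simp only [mem_coe, mem_filter, mem_univ, true_and] at hC
      obtain ⟨hcard, hx, hy⟩ := hC
      refine Finset.mem_powersetCard.2 ⟨?_, ?_⟩
      · intro i hi
        simp only [mem_erase] at hi
        simp only [Finset.mem_sdiff, Finset.mem_univ, true_and, Finset.mem_insert, Finset.mem_singleton]
        push_neg
        exact ⟨hi.2.1, hi.1⟩
      · rw [Finset.card_erase_of_mem (mem_erase.2 ⟨hxy.symm, hy⟩),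
          Finset.card_erase_of_mem hx, hcard]
        omega
    · intro C hC D hD h
      simp only [mem_coe, mem_filter, mem_univ, true_and] at hC hD
      have recov : ∀ E : Finset α, E.card = S ∧ x ∈ E ∧ y ∈ E →
          insert x (insert y ((E.erase x).erase y)) = E := by
        rintro E ⟨-, hx, hy⟩
        rw [Finset.insert_erase (mem_erase.2 ⟨hxy.symm, hy⟩), Finset.insert_erase hx]
      rw [← recov C hC, ← recov D hD]
      simp only at h
      rw [h]
  refine key.trans ?_
  rw [Finset.card_powersetCard]
  have : ((univ : Finset α) \ {x, y}).card = Fintype.card α - 2 := by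
    rw [Finset.card_sdiff_of_subset (subset_univ _), Finset.card_pair hxy, card_univ]
  rw [this]

lemma choose_identity (N S : ℕ) (h2 : 2 ≤ S) (hSN : S ≤ N) :
    (N - 2).choose (S - 2) * (N * (N - 1)) = N.choose S * (S * (S - 1)) := by
  obtain ⟨s, rfl⟩ : ∃ s, S = s + 2 := ⟨S - 2, by omega⟩
  obtain ⟨m, rfl⟩ : ∃ m, N = m + 2 := ⟨N - 2, by omega⟩
  simp only [Nat.add_sub_cancel]
  have h1 := Nat.add_one_mul_choose_eq (m + 1) (s + 1)
  have h2' := Nat.add_one_mul_choose_eq m s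
  zify at h1 h2' ⊢
  push_cast at h1 h2' ⊢
  linear_combination (s + 1 : ℤ) * h1 + (m + 2 : ℤ) * h2'

lemma bad_card_le {F : Type*} [Fintype F] [DecidableEq F] (hF : 1 ≤ Fintype.card F)
    (n d S : ℕ) :
    (univ.filter (fun C : Finset (Fin n → F) => C.card = S ∧
        ¬ ∀ x ∈ C, ∀ y ∈ C, x ≠ y → d ≤ hammingDist x y)).card
      ≤ (Fintype.card F ^ n * (2 ^ n * Fintype.card F ^ (d - 1)))
          * (Fintype.card (Fin n → F) - 2).choose (S - 2) := by
  classical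
  set Pairs := ((univ : Finset ((Fin n → F) × (Fin n → F))).filter
      (fun p => p.1 ≠ p.2 ∧ hammingDist p.1 p.2 < d)) with hPairs
  have hsub : (univ.filter (fun C : Finset (Fin n → F) => C.card = S ∧
        ¬ ∀ x ∈ C, ∀ y ∈ C, x ≠ y → d ≤ hammingDist x y)) ⊆
      Pairs.biUnion (fun p =>
        univ.filter (fun C : Finset (Fin n → F) => C.card = S ∧ p.1 ∈ C ∧ p.2 ∈ C)) := by
    intro C hC
    simp only [mem_filter, mem_univ, true_and] at hC
    obtain ⟨hcard, hbad⟩ := hC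
    push_neg at hbad
    obtain ⟨x, hx, y, hy, hxy, hdist⟩ := hbad
    refine mem_biUnion.2 ⟨(x, y), ?_, ?_⟩
    · exact mem_filter.2 ⟨mem_univ _, hxy, hdist⟩
    · exact mem_filter.2 ⟨mem_univ _, hcard, hx, hy⟩
  refine ((card_le_card hsub).trans card_biUnion_le).trans ?_
  calc ∑ p ∈ Pairs,
        (univ.filter (fun C : Finset (Fin n → F) => C.card = S ∧ p.1 ∈ C ∧ p.2 ∈ C)).card
      ≤ ∑ p ∈ Pairs, (Fintype.card (Fin n → F) - 2).choose (S - 2) := by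
        refine Finset.sum_le_sum fun p hp => ?_
        have hne : p.1 ≠ p.2 := (mem_filter.1 hp).2.1
        exact fixedpair_card_le S hne
    _ = Pairs.card * (Fintype.card (Fin n → F) - 2).choose (S - 2) := by
        rw [Finset.sum_const, smul_eq_mul]
    _ ≤ _ := by
        gcongr
        exact pairs_card_le hF n d

end Aux

open Finset

/-- If `S_q ∈ o(q^{(n-d+1)/2})` as `q → ∞` through prime powers, then the
density of codes of cardinality `S_q` and minimum Hamming distance at least `d` tends to 1. -/
theorem stmt_7 (n d : ℕ) (hd : 2 ≤ d) (hdn : d ≤ n) (S : ℕ → ℕ) (hS : ∀ q, 2 ≤ S q)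
    (hlo : (fun q => (S q : ℝ)) =o[primePowFilter]
      fun q => (q : ℝ) ^ (((n : ℝ) - (d : ℝ) + 1) / 2)) :
    ∀ ε > (0 : ℝ), ∀ᶠ q in primePowFilter,
      ∀ (F : Type) [Field F] [Fintype F] [DecidableEq F],
        Fintype.card F = q → |densityH F n (S q) d - 1| < ε := by
  intro ε hε
  have hppow : ∀ᶠ q in primePowFilter, IsPrimePow q := by
    have h : primePowFilter ≤ Filter.principal {q | IsPrimePow q} := inf_le_right
    exact h (Filter.mem_principal_self _)
  set c : ℝ := Real.sqrt (ε / 2 ^ (n + 2)) with hc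
  have hcpos : 0 < c := Real.sqrt_pos.2 (by positivity)
  have hcsq : c ^ 2 = ε / 2 ^ (n + 2) := Real.sq_sqrt (by positivity)
  have h1 := hlo.def hcpos
  have h2 := hlo.def one_pos
  filter_upwards [h1, h2, hppow] with q hq1 hq2 hpp
  have hq2' : 2 ≤ q := hpp.two_le
  have hqnn : (0:ℝ) ≤ (q:ℝ) := Nat.cast_nonneg q
  rw [Real.norm_natCast, Real.norm_rpow_of_nonneg hqnn, Real.norm_natCast] at hq1 hq2
  rw [one_mul] at hq2
  intro F _ _ _ hcard
  classical
  have hF1 : 1 ≤ Fintype.card F := by rw [hcard]; omega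
  set Sq := S q with hSqdef
  set N := Fintype.card (Fin n → F) with hNdef
  have hNq : N = q ^ n := by rw [hNdef, Fintype.card_fun, Fintype.card_fin, hcard]
  have hQ1 : (1:ℝ) ≤ (q:ℝ) := by exact_mod_cast Nat.one_le_of_lt hq2'
  have hQ2 : (2:ℝ) ≤ (q:ℝ) := by exact_mod_cast hq2'
  have hQpos : (0:ℝ) < (q:ℝ) := by linarith
  -- rpow squared
  have hRsq : ((q:ℝ) ^ (((n:ℝ) - (d:ℝ) + 1)/2)) ^ 2 = (q:ℝ) ^ (n - d + 1 : ℕ) := by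
    rw [← Real.rpow_natCast ((q:ℝ) ^ (((n:ℝ) - (d:ℝ) + 1)/2)) 2,
      ← Real.rpow_mul hqnn, ← Real.rpow_natCast (q:ℝ) (n - d + 1)]
    congr 1
    push_cast [Nat.cast_sub hdn]
    ring
  -- S q ≤ N
  have hSN : Sq ≤ N := by
    have h3 : (q:ℝ) ^ (((n:ℝ) - (d:ℝ) + 1)/2) ≤ (q:ℝ) ^ ((n:ℕ):ℝ) := by
      refine Real.rpow_le_rpow_of_exponent_le hQ1 ?_
      have hdr : (2:ℝ) ≤ (d:ℝ) := by exact_mod_cast hd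
      have hdnr : (d:ℝ) ≤ (n:ℝ) := by exact_mod_cast hdn
      linarith
    have h4 : (q:ℝ) ^ ((n:ℕ):ℝ) = ((q ^ n : ℕ) : ℝ) := by
      rw [Real.rpow_natCast]; push_cast; ring
    have h5 : (Sq : ℝ) ≤ ((N : ℕ) : ℝ) := by
      rw [hNq]; rw [h4] at h3; linarith [hq2.trans h3]
    exact_mod_cast h5
  have hSq1 : 1 ≤ Sq := le_trans (by norm_num) (hS q)
  have hN2 : 2 ≤ N := le_trans hq2' (by rw [hNq]; exact Nat.le_self_pow (by omega) q)
  have hN1 : (1:ℕ) ≤ N := by omega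
  -- counting
  set G := (univ.filter (fun C : Finset (Fin n → F) => C.card = Sq ∧
      ∀ x ∈ C, ∀ y ∈ C, x ≠ y → d ≤ hammingDist x y)) with hGdef
  set Bad := (univ.filter (fun C : Finset (Fin n → F) => C.card = Sq ∧
      ¬ ∀ x ∈ C, ∀ y ∈ C, x ≠ y → d ≤ hammingDist x y)) with hBaddef
  have hT : Nat.card {C : Finset (Fin n → F) // C.card = Sq} = N.choose Sq := by
    rw [Nat.card_eq_fintype_card]
    exact Fintype.card_finset_len Sq
  have hGcard : Nat.card {C : Finset (Fin n → F) // C.card = Sq ∧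
      ∀ x ∈ C, ∀ y ∈ C, x ≠ y → d ≤ hammingDist x y} = G.card := by
    rw [Nat.card_eq_fintype_card, Fintype.card_subtype]
  have hsplit : G.card + Bad.card = N.choose Sq := by
    have hps : (univ.filter fun C : Finset (Fin n → F) => C.card = Sq)
        = Finset.powersetCard Sq univ := by
      rw [Finset.powersetCard_eq_filter, Finset.powerset_univ]
    have h := Finset.card_filter_add_card_filter_not
      (s := univ.filter (fun C : Finset (Fin n → F) => C.card = Sq))
      (p := fun C => ∀ x ∈ C, ∀ y ∈ C, x ≠ y → d ≤ hammingDist x y)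
    rw [Finset.filter_filter, Finset.filter_filter, hps, Finset.card_powersetCard,
      card_univ] at h
    exact h
  have hBadle : Bad.card ≤ (q ^ n * (2 ^ n * q ^ (d - 1))) * (N - 2).choose (Sq - 2) := by
    have h := bad_card_le (F := F) hF1 n d Sq
    rw [hcard] at h
    exact h
  have hnat : Bad.card * (N * (N - 1))
      ≤ (q ^ n * (2 ^ n * q ^ (d - 1))) * (N.choose Sq * (Sq * (Sq - 1))) := by
    calc Bad.card * (N * (N - 1))
        ≤ ((q ^ n * (2 ^ n * q ^ (d - 1))) * (N - 2).choose (Sq - 2)) * (N * (N - 1)) :=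
          Nat.mul_le_mul_right _ hBadle
      _ = (q ^ n * (2 ^ n * q ^ (d - 1))) * ((N - 2).choose (Sq - 2) * (N * (N - 1))) := by
          ring
      _ = (q ^ n * (2 ^ n * q ^ (d - 1))) * (N.choose Sq * (Sq * (Sq - 1))) := by
          rw [choose_identity N Sq (hS q) hSN]
  have htpos : (0:ℝ) < (N.choose Sq : ℝ) := by exact_mod_cast Nat.choose_pos hSN
  have hbnn : (0:ℝ) ≤ (Bad.card : ℝ) := Nat.cast_nonneg _
  have hQN : ((N:ℕ):ℝ) = (q:ℝ) ^ n := by rw [hNq]; push_cast; ring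
  have hQn2 : (2:ℝ) ≤ (q:ℝ) ^ n := by rw [← hQN]; exact_mod_cast hN2
  have hQnpos : (0:ℝ) < (q:ℝ) ^ n := by positivity
  -- key estimate
  have key2 : 2 * ((2:ℝ) ^ n * (q:ℝ) ^ (d - 1) * (Sq:ℝ) ^ 2) < ε * (q:ℝ) ^ n := by
    have hSq2 : (Sq:ℝ) ^ 2 ≤ (ε / 2 ^ (n + 2)) * (q:ℝ) ^ (n - d + 1 : ℕ) := by
      have hSnn : (0:ℝ) ≤ (Sq:ℝ) := Nat.cast_nonneg _
      calc (Sq:ℝ) ^ 2 ≤ (c * (q:ℝ) ^ (((n:ℝ) - (d:ℝ) + 1)/2)) ^ 2 :=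
            pow_le_pow_left₀ hSnn hq1 2
        _ = c ^ 2 * ((q:ℝ) ^ (((n:ℝ) - (d:ℝ) + 1)/2)) ^ 2 := by ring
        _ = (ε / 2 ^ (n + 2)) * (q:ℝ) ^ (n - d + 1 : ℕ) := by rw [hcsq, hRsq]
    have hpow : (q:ℝ) ^ (d - 1) * (q:ℝ) ^ (n - d + 1) = (q:ℝ) ^ n := by
      rw [← pow_add]; congr 1; omega
    have h2p : (2:ℝ) ^ (n + 2) = 2 ^ n * 4 := by rw [pow_add]; norm_num
    calc 2 * ((2:ℝ) ^ n * (q:ℝ) ^ (d - 1) * (Sq:ℝ) ^ 2)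
        ≤ 2 * ((2:ℝ) ^ n * (q:ℝ) ^ (d - 1) * ((ε / 2 ^ (n + 2)) * (q:ℝ) ^ (n - d + 1))) := by
          gcongr
      _ = (ε / 2) * ((q:ℝ) ^ (d - 1) * (q:ℝ) ^ (n - d + 1)) := by
          rw [h2p]
          have h2n : (0:ℝ) < 2 ^ n := by positivity
          field_simp
          ring
      _ = (ε / 2) * (q:ℝ) ^ n := by rw [hpow]
      _ < ε * (q:ℝ) ^ n := by nlinarith
  -- conclude Bad.card < ε * choose
  have hbt : (Bad.card : ℝ) < ε * (N.choose Sq : ℝ) := by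
    have step1 : (Bad.card : ℝ) * ((q:ℝ)^n * ((q:ℝ)^n - 1))
        ≤ ((q:ℝ)^n * (2^n * (q:ℝ)^(d-1))) * ((N.choose Sq : ℝ) * ((Sq:ℝ) * ((Sq:ℝ) - 1))) := by
      have hrw1 : ((q:ℝ)^n - 1) = ((N - 1 : ℕ) : ℝ) := by
        rw [Nat.cast_sub hN1, hQN]; norm_num
      have hrw2 : ((Sq:ℝ) - 1) = ((Sq - 1 : ℕ) : ℝ) := by
        rw [Nat.cast_sub hSq1]; norm_num
      have hnat' := hnat
      rw [← hNq] at hnat'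
      rw [hrw1, hrw2, ← hQN]
      exact_mod_cast hnat'
    have step2 : ((q:ℝ)^n * (2^n * (q:ℝ)^(d-1))) * ((N.choose Sq : ℝ) * ((Sq:ℝ) * ((Sq:ℝ) - 1)))
        ≤ ((q:ℝ)^n * (2^n * (q:ℝ)^(d-1))) * ((N.choose Sq : ℝ) * ((Sq:ℝ) * (Sq:ℝ))) := by
      have hSnn : (0:ℝ) ≤ (Sq:ℝ) := Nat.cast_nonneg _
      gcongr
      linarith
    have step3 : ((q:ℝ)^n * (2^n * (q:ℝ)^(d-1))) * ((N.choose Sq : ℝ) * ((Sq:ℝ) * (Sq:ℝ)))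
        < (ε * (N.choose Sq : ℝ)) * ((q:ℝ)^n * ((q:ℝ)^n / 2)) := by
      have hss : ((Sq:ℝ) * (Sq:ℝ)) = (Sq:ℝ)^2 := by ring
      have hkey : (2:ℝ)^n * (q:ℝ)^(d-1) * ((Sq:ℝ) * (Sq:ℝ)) < ε * (q:ℝ)^n / 2 := by
        rw [hss]; linarith
      calc ((q:ℝ)^n * (2^n * (q:ℝ)^(d-1))) * ((N.choose Sq:ℝ) * ((Sq:ℝ)*(Sq:ℝ)))
          = ((q:ℝ)^n * (N.choose Sq:ℝ)) * ((2:ℝ)^n * (q:ℝ)^(d-1) * ((Sq:ℝ)*(Sq:ℝ))) := by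
            ring
        _ < ((q:ℝ)^n * (N.choose Sq:ℝ)) * (ε * (q:ℝ)^n / 2) :=
            mul_lt_mul_of_pos_left hkey (mul_pos hQnpos htpos)
        _ = (ε * (N.choose Sq:ℝ)) * ((q:ℝ)^n * ((q:ℝ)^n / 2)) := by ring
    have hlow : (Bad.card : ℝ) * ((q:ℝ)^n * ((q:ℝ)^n / 2))
        ≤ (Bad.card : ℝ) * ((q:ℝ)^n * ((q:ℝ)^n - 1)) :=
      mul_le_mul_of_nonneg_left
        (mul_le_mul_of_nonneg_left (by linarith) hQnpos.le) hbnn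
    have hfin : (Bad.card : ℝ) * ((q:ℝ)^n * ((q:ℝ)^n / 2))
        < (ε * (N.choose Sq : ℝ)) * ((q:ℝ)^n * ((q:ℝ)^n / 2)) := by
      linarith
    exact lt_of_mul_lt_mul_right hfin (by positivity)
  -- finish
  have hGr : (G.card : ℝ) = (N.choose Sq : ℝ) - (Bad.card : ℝ) := by
    have h : (G.card : ℝ) + (Bad.card : ℝ) = (N.choose Sq : ℝ) := by exact_mod_cast hsplit
    linarith
  have hdens : densityH F n Sq d = (G.card : ℝ) / (N.choose Sq : ℝ) := by
    simp only [densityH]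
    rw [hGcard, hT]
  rw [hdens, hGr]
  have hrw : ((N.choose Sq : ℝ) - (Bad.card : ℝ)) / (N.choose Sq : ℝ) - 1
      = -((Bad.card : ℝ) / (N.choose Sq : ℝ)) := by
    field_simp
    ring
  rw [hrw, abs_neg, abs_of_nonneg (div_nonneg hbnn htpos.le), div_lt_iff₀ htpos]
  linarith
end

section
/- Fix integers 2 ≤ d ≤ n and for each prime power q let S_q ≥ 2 be an integer. If q^{(n−d+1)/2} ∈ o(S_q) as q → ∞ through prime powers, then the proportion of subsets of F_q^n of cardinality S_q having minimum Hamming distance at least d tends to 0 as q → ∞. -/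
open Filter Asymptotics

namespace Stmt8Aux

open Finset
set_option linter.unusedSectionVars false
variable {F : Type} [DecidableEq F]

def pA (n k : ℕ) (h : k ≤ n) (x : Fin n → F) : Fin k → F :=
  fun i => x (Fin.castLE h i)

def pB (n k : ℕ) (x : Fin n → F) : Fin (n - k) → F :=
  fun j => x ⟨k + j.1, by have := j.2; omega⟩

def glue (n k : ℕ) (u : Fin k → F) (v : Fin (n - k) → F) : Fin n → F :=
  fun i => if h : i.1 < k then u ⟨i.1, h⟩ else v ⟨i.1 - k, by have := i.2; omega⟩

lemma glue_pA_pB (n k : ℕ) (h : k ≤ n) (x : Fin n → F) :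
    glue n k (pA n k h x) (pB n k x) = x := by
  funext i
  by_cases hik : i.1 < k
  · simp only [glue, dif_pos hik, pA]
    rfl
  · simp only [glue, dif_neg hik, pB]
    congr 1
    exact Fin.ext (by simp; omega)

lemma pA_apply_eq (n k : ℕ) (h : k ≤ n) {x y : Fin n → F}
    (h1 : pA n k h x = pA n k h y) (i : Fin n) (hik : i.1 < k) : x i = y i := by
  have := congrFun h1 ⟨i.1, hik⟩
  simpa only [pA, Fin.castLE, Fin.eta] using this

lemma dist_le (n k : ℕ) (h : k ≤ n) {x y : Fin n → F}
    (h1 : pA n k h x = pA n k h y) : hammingDist x y ≤ n - k := by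
  rw [hammingDist]
  calc ({i | x i ≠ y i} : Finset (Fin n)).card
      ≤ (Finset.range (n - k)).card := by
        apply Finset.card_le_card_of_injOn (fun i => i.1 - k)
        · intro i hi
          simp only [Finset.mem_coe, mem_filter, mem_univ, true_and] at hi
          have hk : ¬ i.1 < k := fun hik => hi (pA_apply_eq n k h h1 i hik)
          simp only [Finset.mem_coe, Finset.mem_range]
          have := i.2; omega
        · intro i hi j hj hij
          simp only at hij
          simp only [mem_filter, mem_univ, true_and, Finset.mem_coe] at hi hj
          have hki : ¬ i.1 < k := fun hik => hi (pA_apply_eq n k h h1 i hik)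
          have hkj : ¬ j.1 < k := fun hjk => hj (pA_apply_eq n k h h1 j hjk)
          exact Fin.ext (by omega)
    _ = n - k := Finset.card_range _

lemma injOn_pA (n d : ℕ) (hd : 1 ≤ d) (hdn : d ≤ n) (h : n - d + 1 ≤ n)
    (C : Finset (Fin n → F))
    (hmin : ∀ x ∈ C, ∀ y ∈ C, x ≠ y → d ≤ hammingDist x y) :
    Set.InjOn (pA n (n - d + 1) h) (C : Set (Fin n → F)) := by
  intro x hx y hy hxy
  by_contra hne
  have h1 := hmin x hx y hy hne
  have h2 := dist_le n (n - d + 1) h hxy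
  omega


lemma card_subsets (α : Type) [Fintype α] [DecidableEq α] (S : ℕ) :
    Nat.card {C : Finset α // C.card = S} = (Fintype.card α).choose S := by
  rw [Nat.card_eq_fintype_card, Fintype.card_subtype, ← Finset.powerset_univ,
    ← Finset.powersetCard_eq_filter, Finset.card_powersetCard, Finset.card_univ]

/-- reconstruction lemma -/
lemma psi_phi (n k : ℕ) (hk : k ≤ n) (C : Finset (Fin n → F))
    (hinj : Set.InjOn (pA n k hk) (C : Set (Fin n → F)))
    (T : Finset (Fin k → F)) (hT : T = C.image (pA n k hk))
    (f : {t // t ∈ T} → (Fin (n - k) → F))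
    (hf : ∀ t : {t // t ∈ T}, ∃ c ∈ C, pA n k hk c = ↑t ∧ f t = pB n k c) :
    T.attach.image (fun t : {t // t ∈ T} => glue n k (↑t) (f t)) = C := by
  apply Finset.Subset.antisymm
  · intro z hz
    rw [Finset.mem_image] at hz
    obtain ⟨t, _, hzt⟩ := hz
    obtain ⟨c, hc, hpa, hfe⟩ := hf t
    rw [← hzt, hfe, ← hpa, glue_pA_pB]
    exact hc
  · intro c hc
    have htm : pA n k hk c ∈ T := by rw [hT]; exact Finset.mem_image_of_mem _ hc
    rw [Finset.mem_image]
    refine ⟨⟨pA n k hk c, htm⟩, Finset.mem_attach _ _, ?_⟩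
    obtain ⟨c', hc', hpa, hfe⟩ := hf ⟨pA n k hk c, htm⟩
    have : c' = c := hinj hc' hc hpa
    subst this
    rw [hfe, glue_pA_pB]

variable [Fintype F]

lemma card_good_le (n d S : ℕ) (hd : 1 ≤ d) (hdn : d ≤ n) :
    Nat.card {C : Finset (Fin n → F) // C.card = S ∧
        ∀ x ∈ C, ∀ y ∈ C, x ≠ y → d ≤ hammingDist x y}
      ≤ (Fintype.card F ^ (n - d + 1)).choose S * (Fintype.card F ^ (d - 1)) ^ S := by
  classical
  set k := n - d + 1 with hkdef
  have hk : k ≤ n := by omega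
  set Tgt := (Σ T : {T : Finset (Fin k → F) // T.card = S},
      ({t // t ∈ T.1} → (Fin (n - k) → F))) with hTgt
  have hcard : Nat.card Tgt = (Fintype.card F ^ (n - d + 1)).choose S *
      (Fintype.card F ^ (d - 1)) ^ S := by
    rw [hTgt, Nat.card_eq_fintype_card, Fintype.card_sigma]
    have hterm : ∀ T : {T : Finset (Fin k → F) // T.card = S},
        Fintype.card ({t // t ∈ T.1} → (Fin (n - k) → F))
          = (Fintype.card F ^ (d - 1)) ^ S := by
      intro T
      rw [Fintype.card_fun, Fintype.card_fun, Fintype.card_fin, Fintype.card_coe, T.2]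
      congr 2
      omega
    rw [Finset.sum_congr rfl (fun T _ => hterm T), Finset.sum_const, Finset.card_univ,
      smul_eq_mul]
    congr 1
    rw [← Nat.card_eq_fintype_card, card_subsets, Fintype.card_fun, Fintype.card_fin]
  rw [← hcard]
  apply Nat.card_le_card_of_injective
    (f := fun C => (⟨⟨C.1.image (pA n k hk), by
        rw [Finset.card_image_of_injOn (injOn_pA n d hd hdn hk C.1 C.2.2)]
        exact C.2.1⟩,
      fun t => pB n k ((Finset.mem_image.mp t.2).choose)⟩ : Tgt))
  intro C₁ C₂ hEq
  have key : ∀ C : {C : Finset (Fin n → F) // C.card = S ∧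
      ∀ x ∈ C, ∀ y ∈ C, x ≠ y → d ≤ hammingDist x y},
      ∀ P : Tgt, (⟨⟨C.1.image (pA n k hk), by
          rw [Finset.card_image_of_injOn (injOn_pA n d hd hdn hk C.1 C.2.2)]
          exact C.2.1⟩,
        fun t => pB n k ((Finset.mem_image.mp t.2).choose)⟩ : Tgt) = P →
      P.1.1.attach.image (fun t : {t // t ∈ P.1.1} => glue n k (↑t) (P.2 t)) = C.1 := by
    rintro C P rfl
    apply psi_phi n k hk C.1 (injOn_pA n d hd hdn hk C.1 C.2.2) _ rfl
    intro t
    have hspec := (Finset.mem_image.mp t.2).choose_spec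
    exact ⟨(Finset.mem_image.mp t.2).choose, hspec.1, hspec.2, rfl⟩
  have h1 := key C₁ _ hEq
  have h2 := key C₂ _ rfl
  apply Subtype.ext
  rw [← h1, ← h2]

lemma choose_cast (N S : ℕ) (h : S ≤ N) :
    (N.choose S : ℝ) * (S.factorial : ℝ) = ∏ i ∈ range S, ((N : ℝ) - i) := by
  have h1 : (N.descFactorial S : ℝ) = ∏ i ∈ range S, ((N : ℝ) - i) := by
    rw [Nat.descFactorial_eq_prod_range, Nat.cast_prod]
    refine Finset.prod_congr rfl fun i hi => ?_
    rw [Finset.mem_range] at hi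
    rw [Nat.cast_sub (by omega)]
  rw [← h1, Nat.descFactorial_eq_factorial_mul_choose, Nat.cast_mul, mul_comm]

lemma one_add_sum_le_prod (s : Finset ℕ) (f : ℕ → ℝ) (hf : ∀ i ∈ s, 0 ≤ f i) :
    1 + ∑ i ∈ s, f i ≤ ∏ i ∈ s, (1 + f i) := by
  induction s using Finset.cons_induction with
  | empty => simp
  | cons a s ha ih =>
    rw [Finset.prod_cons, Finset.sum_cons]
    have h0 := hf a (Finset.mem_cons_self a s)
    have hsum : 0 ≤ ∑ i ∈ s, f i :=
      Finset.sum_nonneg fun i hi => hf i (Finset.mem_cons_of_mem hi)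
    have hih := ih fun i hi => hf i (Finset.mem_cons_of_mem hi)
    nlinarith [hih, h0, hsum]

lemma key_ineq (M K S : ℕ) (hM : 2 ≤ M) (hS : 2 ≤ S) (hSK : S ≤ K) :
    ((K.choose S : ℝ) * (M : ℝ) ^ S) * (S : ℝ) ^ 2 ≤ ((M * K).choose S : ℝ) * (8 * K) := by
  have hK0 : (0 : ℝ) < K := by have : 0 < K := by omega
                               exact_mod_cast this
  have hSMK : S ≤ M * K := le_trans hSK (Nat.le_mul_of_pos_left K (by omega))
  have hfac : (0 : ℝ) < (S.factorial : ℝ) := by exact_mod_cast S.factorial_pos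
  rw [← mul_le_mul_iff_of_pos_right hfac]
  have e1 : ((M * K).choose S : ℝ) * (8 * K) * S.factorial
      = (∏ i ∈ range S, (((M * K : ℕ) : ℝ) - i)) * (8 * K) := by
    rw [← choose_cast _ _ hSMK]; ring
  have e2 : (K.choose S : ℝ) * (M : ℝ) ^ S * (S : ℝ) ^ 2 * S.factorial
      = (∏ i ∈ range S, ((M : ℝ) * ((K : ℝ) - i))) * (S : ℝ) ^ 2 := by
    rw [Finset.prod_mul_distrib, Finset.prod_const, Finset.card_range,
      ← choose_cast _ _ hSK]; ring
  rw [e1, e2]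
  -- termwise bound
  have hterm : ∀ i ∈ range S,
      (M : ℝ) * ((K : ℝ) - i) * (1 + i / (2 * K)) ≤ ((M * K : ℕ) : ℝ) - i := by
    intro i hi
    rw [Finset.mem_range] at hi
    have hiK : (i : ℝ) ≤ K := by exact_mod_cast le_of_lt (lt_of_lt_of_le hi hSK)
    have hi0 : (0 : ℝ) ≤ i := Nat.cast_nonneg i
    have hM2 : (2 : ℝ) ≤ M := by exact_mod_cast hM
    push_cast
    have h2K : (0:ℝ) < 2 * (K:ℝ) := by positivity
    rw [← mul_le_mul_iff_of_pos_right h2K]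
    have expand : (M : ℝ) * ((K : ℝ) - i) * (1 + i / (2 * K)) * (2 * K)
        = (M:ℝ) * ((K:ℝ) - i) * (2*K) + (M:ℝ) * ((K:ℝ)-i) * i := by field_simp
    rw [expand]
    nlinarith [mul_nonneg (mul_nonneg (le_of_lt hK0) hi0) (by linarith : (0:ℝ) ≤ (M:ℝ) - 2),
      mul_nonneg (by linarith : (0:ℝ) ≤ (M:ℝ)) (mul_nonneg hi0 hi0)]
  have hnn : ∀ i ∈ range S, (0 : ℝ) ≤ (M : ℝ) * ((K : ℝ) - i) * (1 + i / (2 * K)) := by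
    intro i hi
    rw [Finset.mem_range] at hi
    have hiK : (i : ℝ) ≤ K := by exact_mod_cast le_of_lt (lt_of_lt_of_le hi hSK)
    exact mul_nonneg (mul_nonneg (Nat.cast_nonneg M) (sub_nonneg.mpr hiK)) (by positivity)
  have hprod : ∏ i ∈ range S, ((M : ℝ) * ((K : ℝ) - i) * (1 + i / (2 * K)))
      ≤ ∏ i ∈ range S, (((M * K : ℕ) : ℝ) - i) :=
    Finset.prod_le_prod hnn hterm
  rw [Finset.prod_mul_distrib] at hprod
  -- lower bound the (1 + i/(2K)) product
  have hsum : 1 + ∑ i ∈ range S, (i : ℝ) / (2 * K)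
      ≤ ∏ i ∈ range S, (1 + (i : ℝ) / (2 * K)) :=
    one_add_sum_le_prod _ _ (fun i _ => by positivity)
  have hgauss : (∑ i ∈ range S, (i : ℝ)) * 2 = (S : ℝ) * ((S : ℝ) - 1) := by
    have := Finset.sum_range_id_mul_two S
    have : ((∑ i ∈ range S, i) * 2 : ℕ) = (S * (S - 1) : ℕ) := by rw [this]
    have h2 : (((∑ i ∈ range S, i) * 2 : ℕ) : ℝ) = ((S * (S - 1) : ℕ) : ℝ) := by
      exact_mod_cast this
    push_cast [Nat.cast_sub (by omega : 1 ≤ S)] at h2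
    exact_mod_cast h2
  have hsum2 : ∑ i ∈ range S, (i : ℝ) / (2 * K) = (S : ℝ) * ((S : ℝ) - 1) / (4 * K) := by
    rw [← Finset.sum_div]
    rw [div_eq_div_iff (by positivity) (by positivity)]
    linear_combination (2*(K:ℝ)) * hgauss
  have hS2 : (2 : ℝ) ≤ S := by exact_mod_cast hS
  have hfinal : (S : ℝ) ^ 2 / (8 * K) ≤ 1 + (S : ℝ) * ((S : ℝ) - 1) / (4 * K) := by
    rw [div_le_iff₀ (by positivity)]
    have : (S:ℝ) * ((S:ℝ) - 1) / (4 * K) * (8 * K) = 2 * ((S:ℝ) * ((S:ℝ) - 1)) := by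
      field_simp; ring
    rw [add_mul, this]
    nlinarith
  -- combine
  have hA : (0 : ℝ) ≤ ∏ i ∈ range S, ((M : ℝ) * ((K : ℝ) - i)) := by
    apply Finset.prod_nonneg
    intro i hi
    rw [Finset.mem_range] at hi
    have hiK : (i : ℝ) ≤ K := by exact_mod_cast le_of_lt (lt_of_lt_of_le hi hSK)
    have : (0:ℝ) ≤ (M:ℝ) := Nat.cast_nonneg M
    nlinarith
  have step : (∏ i ∈ range S, ((M : ℝ) * ((K : ℝ) - i))) * ((S : ℝ) ^ 2 / (8 * K))
      ≤ ∏ i ∈ range S, (((M * K : ℕ) : ℝ) - i) := by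
    calc (∏ i ∈ range S, ((M : ℝ) * ((K : ℝ) - i))) * ((S : ℝ) ^ 2 / (8 * K))
        ≤ (∏ i ∈ range S, ((M : ℝ) * ((K : ℝ) - i))) *
            (1 + (S : ℝ) * ((S : ℝ) - 1) / (4 * K)) := by
          exact mul_le_mul_of_nonneg_left hfinal hA
      _ ≤ (∏ i ∈ range S, ((M : ℝ) * ((K : ℝ) - i))) *
            ∏ i ∈ range S, (1 + (i : ℝ) / (2 * K)) := by
          apply mul_le_mul_of_nonneg_left _ hA
          rw [hsum2] at hsum; exact hsum
      _ ≤ _ := hprod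
  calc (∏ i ∈ range S, ((M : ℝ) * ((K : ℝ) - i))) * (S : ℝ) ^ 2
      = ((∏ i ∈ range S, ((M : ℝ) * ((K : ℝ) - i))) * ((S : ℝ) ^ 2 / (8 * K))) * (8 * K) := by
        field_simp
    _ ≤ (∏ i ∈ range S, (((M * K : ℕ) : ℝ) - i)) * (8 * K) := by
        apply mul_le_mul_of_nonneg_right step (by positivity)


lemma density_le (F : Type) [Fintype F] [DecidableEq F] (n d S : ℕ)
    (hd : 2 ≤ d) (hdn : d ≤ n) (hS2 : 2 ≤ S) (hF : 2 ≤ Fintype.card F) :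
    densityH F n S d ≤ 8 * ((Fintype.card F ^ (n - d + 1) : ℕ) : ℝ) / (S : ℝ) ^ 2 := by
  classical
  set q := Fintype.card F with hq
  set K := q ^ (n - d + 1) with hK
  set M := q ^ (d - 1) with hM
  have hMK : M * K = q ^ n := by rw [← pow_add]; congr 1; omega
  have hM2 : 2 ≤ M := le_trans hF (Nat.le_self_pow (by omega) q)
  have hK2 : 2 ≤ K := le_trans hF (Nat.le_self_pow (by omega) q)
  have hcardfun : Fintype.card (Fin n → F) = q ^ n := by
    rw [Fintype.card_fun, Fintype.card_fin]
  have hden : Nat.card {C : Finset (Fin n → F) // C.card = S} = (q ^ n).choose S := by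
    rw [card_subsets, hcardfun]
  have hnum := card_good_le (F := F) n d S (by omega) hdn
  rw [← hq] at hnum
  rw [densityH, hden]
  by_cases hSK : S ≤ K
  · have hSN : S ≤ q ^ n := le_trans hSK (by rw [← hMK]; exact Nat.le_mul_of_pos_left K (by omega))
    have hden0 : (0 : ℝ) < ((q ^ n).choose S : ℝ) := by
      exact_mod_cast Nat.choose_pos hSN
    calc (Nat.card {C : Finset (Fin n → F) // C.card = S ∧
            ∀ x ∈ C, ∀ y ∈ C, x ≠ y → d ≤ hammingDist x y} : ℝ) / ((q ^ n).choose S : ℝ)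
        ≤ ((K.choose S : ℝ) * (M : ℝ) ^ S) / ((q ^ n).choose S : ℝ) := by
          gcongr
          exact_mod_cast hnum
      _ ≤ 8 * (K : ℝ) / (S : ℝ) ^ 2 := by
          rw [div_le_div_iff₀ hden0 (by positivity)]
          have := key_ineq M K S hM2 hS2 hSK
          rw [hMK] at this
          linarith
  · push_neg at hSK
    have : K.choose S = 0 := Nat.choose_eq_zero_of_lt hSK
    rw [this, zero_mul, Nat.le_zero] at hnum
    rw [hnum]
    simp only [Nat.cast_zero, zero_div]
    positivity


end Stmt8Aux

/-- If `q^{(n-d+1)/2} ∈ o(S_q)` as `q → ∞` through prime powers, then the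
density of codes of cardinality `S_q` and minimum Hamming distance at least `d` tends to 0. -/
theorem stmt_8 (n d : ℕ) (hd : 2 ≤ d) (hdn : d ≤ n) (S : ℕ → ℕ) (hS : ∀ q, 2 ≤ S q)
    (hlo : (fun q => (q : ℝ) ^ (((n : ℝ) - (d : ℝ) + 1) / 2)) =o[primePowFilter]
      fun q => (S q : ℝ)) :
    ∀ ε > (0 : ℝ), ∀ᶠ q in primePowFilter,
      ∀ (F : Type) [Field F] [Fintype F] [DecidableEq F],
        Fintype.card F = q → densityH F n (S q) d < ε := by
  intro ε hε
  have hc : (0 : ℝ) < Real.sqrt (ε / 16) := Real.sqrt_pos.mpr (by linarith)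
  have hev1 := hlo.def hc
  have hev2 : ∀ᶠ q in primePowFilter, IsPrimePow q := by
    rw [primePowFilter]
    exact (Filter.eventually_inf_principal).mpr (Filter.Eventually.of_forall fun q h => h)
  filter_upwards [hev1, hev2] with q hq hpp
  intro F _ _ _ hcard
  have hq2 : 2 ≤ q := hpp.two_le
  have hS2 := hS q
  have hb := Stmt8Aux.density_le F n d (S q) hd hdn hS2 (by rw [hcard]; exact hq2)
  rw [hcard] at hb
  have hq0 : (0 : ℝ) ≤ (q : ℝ) := by positivity
  set x : ℝ := ((n : ℝ) - (d : ℝ) + 1) / 2 with hxdef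
  rw [Real.norm_eq_abs, Real.norm_eq_abs,
    abs_of_nonneg (Real.rpow_nonneg hq0 _), abs_of_nonneg (by positivity)] at hq
  have hKb : ((q ^ (n - d + 1) : ℕ) : ℝ) ≤ ε / 16 * (S q : ℝ) ^ 2 := by
    have hqK : ((q ^ (n - d + 1) : ℕ) : ℝ) = ((q : ℝ) ^ x) ^ 2 := by
      have hx2 : ((n - d + 1 : ℕ) : ℝ) = x * 2 := by
        rw [hxdef]
        push_cast [Nat.cast_sub hdn]
        ring
      have hcast : ((q ^ (n - d + 1) : ℕ) : ℝ) = (q : ℝ) ^ ((n - d + 1 : ℕ) : ℝ) := by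
        rw [Real.rpow_natCast]
        push_cast
        ring
      rw [hcast, hx2, Real.rpow_mul hq0, show (2 : ℝ) = ((2 : ℕ) : ℝ) by norm_num,
        Real.rpow_natCast]
    rw [hqK]
    calc ((q : ℝ) ^ x) ^ 2 ≤ (Real.sqrt (ε / 16) * (S q : ℝ)) ^ 2 := by
          apply pow_le_pow_left₀ (Real.rpow_nonneg hq0 _) hq
      _ = ε / 16 * (S q : ℝ) ^ 2 := by
          rw [mul_pow, Real.sq_sqrt (by linarith)]
  have hS0 : (0 : ℝ) < (S q : ℝ) ^ 2 := by
    have : 0 < S q := by omega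
    positivity
  calc densityH F n (S q) d ≤ 8 * ((q ^ (n - d + 1) : ℕ) : ℝ) / (S q : ℝ) ^ 2 := hb
    _ ≤ ε / 2 := by rw [div_le_iff₀ hS0]; linarith
    _ < ε := by linarith
end

section
/- Fix integers 2 ≤ d ≤ n. For each prime power q, the probability that a uniformly random subset of F_q^n of cardinality q^{n−d+1} has minimum Hamming distance at least d tends to 0 as q → ∞. In other words, the typical non-linear code of the maximal (Singleton-bound) cardinality q^{n−d+1} is not MDS. -/
open Filter

section Aux

open Finset Nat

set_option linter.unusedSectionVars false

/-- Lower bound for binomial coefficients: if `c * S ≤ N` then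
`N.choose S ≥ c^(S-1) * (N - S + 1)`. -/
private lemma choose_lower (c S N : ℕ) (hc : 1 ≤ c) (hS : 1 ≤ S) (hcs : c * S ≤ N) :
    c ^ (S - 1) * (N - S + 1) ≤ N.choose S := by
  obtain ⟨T, rfl⟩ : ∃ T, S = T + 1 := ⟨S - 1, by omega⟩
  have hT1 : T + 1 ≤ N := le_trans (Nat.le_mul_of_pos_left _ hc) hcs
  have hNT : N - (T + 1) + 1 = N - T := by omega
  have hfac : c ^ T * (N - (T + 1) + 1) * (T + 1)! ≤ N.descFactorial (T + 1) := by
    rw [Nat.descFactorial_eq_prod_range, prod_range_succ]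
    have hterm : ∏ i ∈ range T, (c * (T + 1 - i)) ≤ ∏ i ∈ range T, (N - i) := by
      apply Finset.prod_le_prod'
      intro i hi
      simp only [mem_range] at hi
      have h1 : c * (T + 1 - i) + c * i = c * (T + 1) := by
        rw [← Nat.mul_add]; congr 1; omega
      have h2 : i ≤ c * i := Nat.le_mul_of_pos_left i hc
      omega
    have hprod : ∏ i ∈ range T, (c * (T + 1 - i)) = c ^ T * ∏ i ∈ range T, (T + 1 - i) := by
      rw [Finset.prod_mul_distrib, Finset.prod_const, card_range]
    have hfact : ∏ i ∈ range T, (T + 1 - i) = (T + 1)! := by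
      rw [← Nat.descFactorial_eq_prod_range]
      have := Nat.factorial_mul_descFactorial (show T ≤ T + 1 by omega)
      simpa using this
    calc c ^ T * (N - (T + 1) + 1) * (T + 1)!
        = (c ^ T * ∏ i ∈ range T, (T + 1 - i)) * (N - T) := by rw [hfact, hNT]; ring
      _ = (∏ i ∈ range T, (c * (T + 1 - i))) * (N - T) := by rw [hprod]
      _ ≤ (∏ i ∈ range T, (N - i)) * (N - T) := Nat.mul_le_mul_right _ hterm
  rw [Nat.descFactorial_eq_factorial_mul_choose] at hfac
  have hpos : 0 < (T + 1)! := Nat.factorial_pos _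
  have key : (c ^ T * (N - (T + 1) + 1)) * (T + 1)! ≤ N.choose (T + 1) * (T + 1)! := by
    rw [mul_comm (N.choose _)]; exact hfac
  have := Nat.le_of_mul_le_mul_right key hpos
  simpa using this

variable {F : Type} [Fintype F] [DecidableEq F]

variable (F) in
private def proj (n k : ℕ) (hk : k ≤ n) (x : Fin n → F) : Fin k → F :=
  fun i => x (Fin.castLE hk i)

variable (F) in
private def mrg (n k m : ℕ) (hkm : k + m = n) (u : Fin k → F) (v : Fin m → F) :
    Fin n → F :=
  fun i => if h : i.1 < k then u ⟨i.1, h⟩ else v ⟨i.1 - k, by omega⟩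

private lemma mrg_proj (n k m : ℕ) (hkm : k + m = n) (x : Fin n → F) :
    mrg F n k m hkm (proj F n k (by omega) x)
      (fun j => x ⟨k + j.1, by omega⟩) = x := by
  funext i
  simp only [mrg, proj]
  split_ifs with h
  · congr 1
  · congr 1
    ext
    simp
    omega

private lemma dist_le (n k m : ℕ) (hkm : k + m = n) (x y : Fin n → F)
    (h : proj F n k (by omega) x = proj F n k (by omega) y) :
    hammingDist x y ≤ m := by
  have hsub : (Finset.univ.filter fun i : Fin n => x i ≠ y i) ⊆
      (Finset.univ.filter fun i : Fin n => k ≤ i.1) := by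
    intro i hi
    simp only [mem_filter, mem_univ, true_and] at hi ⊢
    by_contra hlt
    push_neg at hlt
    exact hi (congrFun h ⟨i.1, hlt⟩)
  calc hammingDist x y ≤ (Finset.univ.filter fun i : Fin n => k ≤ i.1).card :=
        Finset.card_le_card hsub
    _ ≤ (Finset.range m).card := by
        apply Finset.card_le_card_of_injOn (fun i => i.1 - k)
        · intro i hi
          simp only [mem_coe, mem_filter, mem_univ, true_and] at hi
          simp only [mem_coe, mem_range]
          omega
        · intro i hi j hj hij
          dsimp only at hij
          simp only [coe_filter, Set.mem_setOf_eq, mem_univ, true_and] at hi hj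
          ext
          omega
    _ = m := Finset.card_range m

/-- Any code of cardinality `q^k` in `F^n` (with `k + m = n`) and minimum distance
`≥ m + 1` is the graph of a function `F^k → F^m`; hence there are at most
`(q^m)^(q^k)` of them. -/
private lemma numer_le (n k m : ℕ) (hkm : k + m = n) :
    Nat.card {C : Finset (Fin n → F) // C.card = Fintype.card F ^ k ∧
        ∀ x ∈ C, ∀ y ∈ C, x ≠ y → m + 1 ≤ hammingDist x y}
      ≤ (Fintype.card F ^ m) ^ (Fintype.card F ^ k) := by
  classical
  set q := Fintype.card F
  have hk : k ≤ n := by omega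
  have hinj : ∀ (C : Finset (Fin n → F)),
      (∀ x ∈ C, ∀ y ∈ C, x ≠ y → m + 1 ≤ hammingDist x y) →
      ∀ x ∈ C, ∀ y ∈ C, proj F n k hk x = proj F n k hk y → x = y := by
    intro C hC x hx y hy hp
    by_contra hne
    have h1 := hC x hx y hy hne
    have h2 := dist_le n k m hkm x y hp
    omega
  have huniq : ∀ (C : Finset (Fin n → F)), C.card = q ^ k →
      (∀ x ∈ C, ∀ y ∈ C, x ≠ y → m + 1 ≤ hammingDist x y) →
      ∀ u : Fin k → F, ∃! x, x ∈ C ∧ proj F n k hk x = u := by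
    intro C hcard hC u
    have himg : C.image (proj F n k hk) = Finset.univ := by
      apply Finset.eq_univ_of_card
      rw [Finset.card_image_of_injOn (fun x hx y hy => hinj C hC x hx y hy), hcard]
      simp [q]
    have hu : u ∈ C.image (proj F n k hk) := himg ▸ Finset.mem_univ u
    obtain ⟨x, hx, hpx⟩ := Finset.mem_image.mp hu
    exact ⟨x, ⟨hx, hpx⟩, fun y ⟨hy, hpy⟩ => hinj C hC y hy x hx (hpy.trans hpx.symm)⟩
  set Φ : {C : Finset (Fin n → F) // C.card = q ^ k ∧
        ∀ x ∈ C, ∀ y ∈ C, x ≠ y → m + 1 ≤ hammingDist x y} →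
      ((Fin k → F) → (Fin m → F)) :=
    fun C u => (fun j : Fin m =>
      (C.1.choose (fun x => proj F n k hk x = u)
        (huniq C.1 C.2.1 C.2.2 u)) ⟨k + j.1, by omega⟩) with hΦ
  have hrec : ∀ C : {C : Finset (Fin n → F) // C.card = q ^ k ∧
        ∀ x ∈ C, ∀ y ∈ C, x ≠ y → m + 1 ≤ hammingDist x y},
      C.1 = Finset.image (fun u => mrg F n k m hkm u (Φ C u)) Finset.univ := by
    intro C
    refine Finset.eq_of_subset_of_card_le ?_ ?_
    · intro x hx
      apply Finset.mem_image.mpr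
      refine ⟨proj F n k hk x, Finset.mem_univ _, ?_⟩
      have hch := C.1.choose_spec (fun y => proj F n k hk y = proj F n k hk x)
        (huniq C.1 C.2.1 C.2.2 _)
      have hxeq : C.1.choose (fun y => proj F n k hk y = proj F n k hk x)
          (huniq C.1 C.2.1 C.2.2 _) = x :=
        hinj C.1 C.2.2 _ hch.1 x hx hch.2
      simp only [hΦ]
      rw [hxeq]
      exact mrg_proj n k m hkm x
    · calc (Finset.image (fun u => mrg F n k m hkm u (Φ C u)) Finset.univ).card
          ≤ (Finset.univ : Finset (Fin k → F)).card := Finset.card_image_le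
        _ = q ^ k := by simp [q]
        _ = C.1.card := C.2.1.symm
  have hΦinj : Function.Injective Φ := by
    intro C₁ C₂ hEq
    apply Subtype.ext
    rw [hrec C₁, hrec C₂, hEq]
  calc Nat.card {C : Finset (Fin n → F) // C.card = q ^ k ∧
        ∀ x ∈ C, ∀ y ∈ C, x ≠ y → m + 1 ≤ hammingDist x y}
      ≤ Nat.card ((Fin k → F) → (Fin m → F)) := Nat.card_le_card_of_injective Φ hΦinj
    _ = (q ^ m) ^ (q ^ k) := by
        rw [Nat.card_eq_fintype_card]
        simp [q]

private lemma denom_eq (n S : ℕ) :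
    Nat.card {C : Finset (Fin n → F) // C.card = S}
      = (Fintype.card F ^ n).choose S := by
  classical
  rw [Nat.card_eq_fintype_card, Fintype.card_finset_len]
  congr 1
  simp

end Aux

/-- The probability that a uniformly random subset of `F_q^n` of the
Singleton-bound cardinality `q^{n-d+1}` has minimum Hamming distance at least `d` (i.e., is
MDS) tends to 0 as `q → ∞` through prime powers. -/
theorem stmt_9 (n d : ℕ) (hd : 2 ≤ d) (hdn : d ≤ n) :
    ∀ ε > (0 : ℝ), ∀ᶠ q in primePowFilter,
      ∀ (F : Type) [Field F] [Fintype F] [DecidableEq F],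
        Fintype.card F = q → densityH F n (q ^ (n - d + 1)) d < ε := by
  classical
  intro ε hε
  obtain ⟨M, hM⟩ := exists_nat_gt (1 / ε)
  have hev : ∀ᶠ q in Filter.atTop,
      ∀ (F : Type) [Field F] [Fintype F] [DecidableEq F],
        Fintype.card F = q → densityH F n (q ^ (n - d + 1)) d < ε := by
    rw [Filter.eventually_atTop]
    refine ⟨M + 2, ?_⟩
    intro q hq F _ _ _ hF
    obtain ⟨m, rfl⟩ : ∃ m, d = m + 1 := ⟨d - 1, by omega⟩
    subst hF
    set q := Fintype.card F with hqdef
    have hq2 : 2 ≤ q := by omega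
    set k := n - (m + 1) + 1 with hk
    have hkm : k + m = n := by omega
    set N := q ^ n with hN
    set S := q ^ k with hS
    set c := q ^ m with hc
    have hc1 : 1 ≤ c := Nat.one_le_pow _ _ (by omega)
    have hS1 : 1 ≤ S := Nat.one_le_pow _ _ (by omega)
    have hcS : c * S = N := by
      rw [hc, hS, hN, ← pow_add]
      congr 1
      omega
    -- numerator bound
    have hA := numer_le (F := F) n k m hkm
    -- denominator bound
    have hBeq := denom_eq (F := F) n S
    have hBge : c ^ (S - 1) * (N - S + 1) ≤ N.choose S :=
      choose_lower c S N hc1 hS1 hcS.le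
    -- arithmetic facts
    have hn1 : 1 ≤ n := by omega
    have hmn : m ≤ n - 1 := by omega
    have hSle : S ≤ q ^ (n - 1) := Nat.pow_le_pow_right (by omega) (by omega)
    have hXN : q ^ (n - 1) * (q - 1) + q ^ (n - 1) = N := by
      have h1 : q ^ (n - 1) * q = N := by
        rw [hN, ← pow_succ]
        congr 1
        omega
      have h2 : q - 1 + 1 = q := by omega
      calc q ^ (n - 1) * (q - 1) + q ^ (n - 1) = q ^ (n - 1) * (q - 1 + 1) := by ring
        _ = q ^ (n - 1) * q := by rw [h2]
        _ = N := h1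
    have hNS : q ^ (n - 1) * (q - 1) ≤ N - S + 1 := by omega
    -- real-number endgame
    rw [densityH]
    set A : ℕ := Nat.card {C : Finset (Fin n → F) // C.card = q ^ (n - (m + 1) + 1) ∧
        ∀ x ∈ C, ∀ y ∈ C, x ≠ y → m + 1 ≤ hammingDist x y} with hAdef
    set B : ℕ := Nat.card {C : Finset (Fin n → F) // C.card = q ^ (n - (m + 1) + 1)} with hBdef
    have hAle : A ≤ c ^ S := hA
    have hBge' : c ^ (S - 1) * (N - S + 1) ≤ B := by
      rw [hBdef]
      rw [show (q ^ (n - (m + 1) + 1) : ℕ) = S from rfl]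
      rw [denom_eq]
      exact hBge
    -- cast to ℝ
    have hq1R : (1 : ℝ) ≤ (q : ℝ) := by exact_mod_cast (by omega : 1 ≤ q)
    have hcR0 : (0 : ℝ) < (c : ℝ) := by
      have : 0 < c := hc1
      exact_mod_cast this
    have hc1R : (0 : ℝ) < ((c : ℝ)) ^ (S - 1) := by positivity
    have hqm1R : (0 : ℝ) < (q : ℝ) - 1 := by
      have : (2 : ℝ) ≤ (q : ℝ) := by exact_mod_cast hq2
      linarith
    have hBlowR : ((c : ℝ)) ^ (S - 1) * ((q : ℝ) ^ (n - 1) * ((q : ℝ) - 1)) ≤ (B : ℝ) := by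
      calc ((c : ℝ)) ^ (S - 1) * ((q : ℝ) ^ (n - 1) * ((q : ℝ) - 1))
          = ((c ^ (S - 1) : ℕ) : ℝ) * (((q ^ (n - 1) * (q - 1) : ℕ)) : ℝ) := by
            push_cast [Nat.cast_sub (show 1 ≤ q by omega)]
            ring
        _ ≤ ((c ^ (S - 1) : ℕ) : ℝ) * (((N - S + 1 : ℕ)) : ℝ) := by
            apply mul_le_mul_of_nonneg_left _ (by positivity)
            exact_mod_cast hNS
        _ = (((c ^ (S - 1) * (N - S + 1) : ℕ)) : ℝ) := by push_cast; ring
        _ ≤ (B : ℝ) := by exact_mod_cast hBge'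
    have hB0 : (0 : ℝ) < (B : ℝ) := lt_of_lt_of_le (by positivity) hBlowR
    rw [div_lt_iff₀ hB0]
    have h3 : (c : ℝ) < ε * ((q : ℝ) ^ (n - 1) * ((q : ℝ) - 1)) := by
      have hcle : (c : ℝ) ≤ (q : ℝ) ^ (n - 1) := by
        rw [hc]
        push_cast
        exact pow_le_pow_right₀ hq1R hmn
      have hqe : 1 / ε < (q : ℝ) - 1 := by
        have hMq : (M : ℝ) ≤ (q : ℝ) - 1 := by
          have : (M + 1 : ℕ) ≤ q - 1 := by omega
          have := (Nat.cast_le (α := ℝ)).mpr this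
          push_cast [Nat.cast_sub (show 1 ≤ q by omega)] at this
          linarith
        linarith
      have heps : 1 < ε * ((q : ℝ) - 1) := by
        rw [div_lt_iff₀ hε] at hqe
        linarith [mul_comm ε ((q : ℝ) - 1)]
      have hq0 : (0 : ℝ) < (q : ℝ) ^ (n - 1) := by positivity
      nlinarith
    have hpow : ((c : ℝ)) ^ S = ((c : ℝ)) ^ (S - 1) * (c : ℝ) := by
      rw [← pow_succ]
      congr 1
      omega
    calc (A : ℝ) ≤ ((c : ℝ)) ^ (S - 1) * (c : ℝ) := by
          rw [← hpow]
          exact_mod_cast hAle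
      _ < ((c : ℝ)) ^ (S - 1) * (ε * ((q : ℝ) ^ (n - 1) * ((q : ℝ) - 1))) :=
          mul_lt_mul_of_pos_left h3 hc1R
      _ = ε * (((c : ℝ)) ^ (S - 1) * ((q : ℝ) ^ (n - 1) * ((q : ℝ) - 1))) := by ring
      _ ≤ ε * B := mul_le_mul_of_nonneg_left hBlowR hε.le
  exact hev.filter_mono inf_le_left
end

section
/- Let 1 ≤ k ≤ n and 0 ≤ r ≤ k. For every k-dimensional subspace X of F_q^n, the number of k-dimensional subspaces Y of F_q^n with dim(X ∩ Y) ≥ k − r equals Σ_{i=0}^{r} q^{i²} · [k choose i]_q · [n−k choose i]_q. In particular, this quantity is independent of X. -/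
set_option maxHeartbeats 1000000

open Module Submodule Finset

/-- The `q`-binomial (Gaussian) coefficient `[m choose l]_q`, defined via the `q`-Pascal
recurrence `[m+1, l+1]_q = [m, l]_q + q^{l+1} [m, l+1]_q`. It counts the `l`-dimensional
subspaces of an `m`-dimensional vector space over `F_q`. -/
def qbin (q : ℕ) : ℕ → ℕ → ℕ
  | _, 0 => 1
  | 0, _ + 1 => 0
  | m + 1, l + 1 => qbin q m l + q ^ (l + 1) * qbin q m (l + 1)

lemma qbin_zero (q m : ℕ) : qbin q m 0 = 1 := by cases m <;> rfl

lemma qbin_succ_succ (q m l : ℕ) :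
    qbin q (m+1) (l+1) = qbin q m l + q ^ (l + 1) * qbin q m (l + 1) := rfl

lemma qbin_eq_zero (q : ℕ) {m l : ℕ} (h : m < l) : qbin q m l = 0 := by
  induction m generalizing l with
  | zero => obtain ⟨l, rfl⟩ := Nat.exists_eq_add_of_lt h; rfl
  | succ m ih =>
    obtain ⟨l, rfl⟩ : ∃ l', l = l' + 1 := ⟨l - 1, by omega⟩
    rw [qbin_succ_succ, ih (by omega), ih (by omega), mul_zero, add_zero]

/-- The product identity, in ℤ. -/
lemma qbin_prod (q : ℕ) (m l : ℕ) :
    (qbin q m l : ℤ) * ∏ j ∈ Finset.range l, ((q:ℤ)^l - q^j)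
      = ∏ j ∈ Finset.range l, ((q:ℤ)^m - q^j) := by
  induction m generalizing l with
  | zero =>
    cases l with
    | zero => simp [qbin_zero]
    | succ l =>
      rw [qbin_eq_zero q (by omega)]
      push_cast
      rw [zero_mul]
      symm
      apply Finset.prod_eq_zero (Finset.mem_range.mpr (Nat.succ_pos l))
      simp
  | succ m ih =>
    cases l with
    | zero => simp [qbin_zero]
    | succ l =>
      have key : ∀ s : ℕ, ∏ j ∈ Finset.range (l+1), ((q:ℤ)^(s+1) - q^j)
          = ((q:ℤ)^(s+1) - 1) * (q^l * ∏ j ∈ Finset.range l, ((q:ℤ)^s - q^j)) := by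
        intro s
        rw [Finset.prod_range_succ']
        have : ∀ j ∈ Finset.range l, ((q:ℤ)^(s+1) - q^(j+1)) = q * ((q:ℤ)^s - q^j) := by
          intro j _; ring
        rw [Finset.prod_congr rfl this, Finset.prod_mul_distrib, Finset.prod_const,
          Finset.card_range]
        ring
      have hA := ih l
      have hB := ih (l+1)
      have hsplit : ∏ j ∈ Finset.range (l+1), ((q:ℤ)^m - q^j)
          = (∏ j ∈ Finset.range l, ((q:ℤ)^m - q^j)) * ((q:ℤ)^m - q^l) :=
        Finset.prod_range_succ _ _
      rw [hsplit, key l] at hB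
      rw [qbin_succ_succ, key m, key l]
      push_cast
      linear_combination ((q:ℤ)^l*((q:ℤ)^(l+1)-1)) * hA + (q:ℤ)^(l+1) * hB

lemma qbin_mul_prod {q : ℕ} (hq : 1 ≤ q) (m l : ℕ) :
    qbin q m l * ∏ j ∈ Finset.range l, (q^l - q^j)
      = ∏ j ∈ Finset.range l, (q^m - q^j) := by
  rcases lt_or_ge m l with h | h
  · rw [qbin_eq_zero q h, zero_mul]
    symm
    apply Finset.prod_eq_zero (Finset.mem_range.mpr (by omega : m < l))
    omega
  · have cast_prod : ∀ s : ℕ, l ≤ s →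
        ((∏ j ∈ Finset.range l, (q^s - q^j) : ℕ) : ℤ)
          = ∏ j ∈ Finset.range l, ((q:ℤ)^s - q^j) := by
      intro s hs
      rw [Nat.cast_prod]
      refine Finset.prod_congr rfl fun j hj => ?_
      have : q^j ≤ q^s := Nat.pow_le_pow_right hq (by simp at hj; omega)
      push_cast [Nat.cast_sub this]
      ring
    have := qbin_prod q m l
    rw [← cast_prod l le_rfl, ← cast_prod m h, ← Nat.cast_mul, Nat.cast_inj] at this
    exact this

lemma prod_pos {q : ℕ} (hq : 2 ≤ q) (l : ℕ) :
    0 < ∏ j ∈ Finset.range l, (q^l - q^j) := by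
  apply Finset.prod_pos
  intro j hj
  simp only [Finset.mem_range] at hj
  have := Nat.pow_lt_pow_right (by omega : 1 < q) hj
  omega

section LemA
variable {F V : Type*} [Field F] [Fintype F] [AddCommGroup V] [Module F V] [Finite V]

attribute [local instance] Fintype.ofFinite

/-- The number of `l`-dimensional subspaces of a finite vector space. -/
lemma card_grassmannian (l : ℕ) :
    Nat.card {W : Submodule F V // finrank F W = l}
      = qbin (Fintype.card F) (finrank F V) l := by
  set q := Fintype.card F with hq'
  set m := finrank F V with hm
  have hq : 2 ≤ q := Fintype.one_lt_card
  rcases lt_or_ge m l with h | h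
  · have : IsEmpty {W : Submodule F V // finrank F W = l} := by
      constructor; rintro ⟨W, hW⟩
      have := Submodule.finrank_le W
      omega
    rw [Nat.card_of_isEmpty, qbin_eq_zero q h]
  · -- double counting linearly independent tuples
    have key : ∀ (W : Submodule F V), finrank F W = l →
        Nat.card {t : Fin l → W // LinearIndependent F t}
          = ∏ j ∈ Finset.range l, (q^l - q^j) := by
      intro W hW
      rw [card_linearIndependent (by rw [hW]), hW, ← Fin.prod_univ_eq_prod_range]
    -- the fibration map
    set f : {s : Fin l → V // LinearIndependent F s} → {W : Submodule F V // finrank F W = l} :=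
      fun s => ⟨Submodule.span F (Set.range s.1), by
        rw [finrank_span_eq_card s.2, Fintype.card_fin]⟩ with hf
    have fiber_equiv : ∀ W : {W : Submodule F V // finrank F W = l},
        {s // f s = W} ≃ {t : Fin l → (W : Submodule F V) // LinearIndependent F t} := by
      intro W
      refine ⟨fun s => ⟨fun j => ⟨s.1.1 j, ?_⟩, ?_⟩, fun t => ⟨⟨(W.1).subtype ∘ t.1,
        t.2.map' W.1.subtype (Submodule.ker_subtype W.1)⟩, ?_⟩, ?_, ?_⟩
      · have : Submodule.span F (Set.range s.1.1) = W.1 := congrArg Subtype.val s.2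
        rw [← this]
        exact Submodule.subset_span (Set.mem_range_self j)
      · apply LinearIndependent.of_comp W.1.subtype
        exact s.1.2
      · -- f of the lifted tuple is W
        apply Subtype.ext
        show Submodule.span F (Set.range (W.1.subtype ∘ t.1)) = W.1
        rw [Set.range_comp, ← Submodule.map_span]
        have hspan : Submodule.span F (Set.range t.1) = ⊤ := by
          apply Submodule.eq_top_of_finrank_eq
          rw [finrank_span_eq_card t.2, Fintype.card_fin, W.2]
        rw [hspan, Submodule.map_top, Submodule.range_subtype]
      · intro s; apply Subtype.ext; apply Subtype.ext; rfl
      · intro t; apply Subtype.ext; rfl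
    have hcalc : qbin q m l * ∏ j ∈ Finset.range l, (q^l - q^j)
        = Nat.card {W : Submodule F V // finrank F W = l} * ∏ j ∈ Finset.range l, (q^l - q^j) :=
    calc qbin q m l * ∏ j ∈ Finset.range l, (q^l - q^j)
        = ∏ j ∈ Finset.range l, (q^m - q^j) := qbin_mul_prod (by omega) m l
      _ = Nat.card {s : Fin l → V // LinearIndependent F s} := by
          rw [card_linearIndependent h, ← Fin.prod_univ_eq_prod_range]
      _ = Nat.card (Σ W : {W : Submodule F V // finrank F W = l}, {s // f s = W}) := by
          exact Nat.card_congr (Equiv.sigmaFiberEquiv f).symm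
      _ = ∑ W : {W : Submodule F V // finrank F W = l}, Nat.card {s // f s = W} := by
          simp only [Nat.card_eq_fintype_card, Fintype.card_sigma]
      _ = ∑ W : {W : Submodule F V // finrank F W = l}, ∏ j ∈ Finset.range l, (q^l - q^j) := by
          refine Finset.sum_congr rfl fun W _ => ?_
          rw [Nat.card_congr (fiber_equiv W), key W.1 W.2]
      _ = Nat.card {W : Submodule F V // finrank F W = l} * ∏ j ∈ Finset.range l, (q^l - q^j) := by
          rw [Finset.sum_const, Nat.card_eq_fintype_card, Finset.card_univ, smul_eq_mul]
    exact (Nat.eq_of_mul_eq_mul_right (prod_pos hq l) hcalc).symm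
end LemA

section LemB
variable {F V : Type*} [Field F] [Fintype F] [AddCommGroup V] [Module F V] [Finite V]

attribute [local instance] Fintype.ofFinite

/-- Count of linearly independent tuples, valid also beyond the dimension. -/
lemma card_li (i : ℕ) :
    Nat.card {s : Fin i → V // LinearIndependent F s}
      = ∏ j ∈ Finset.range i, ((Fintype.card F)^(finrank F V) - (Fintype.card F)^j) := by
  set q := Fintype.card F
  set m := finrank F V with hm
  rcases le_or_gt i m with h | h
  · rw [card_linearIndependent h, ← Fin.prod_univ_eq_prod_range]
  · have : IsEmpty {s : Fin i → V // LinearIndependent F s} := by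
      constructor; rintro ⟨s, hs⟩
      have := hs.fintype_card_le_finrank
      simp only [Fintype.card_fin] at this
      omega
    rw [Nat.card_of_isEmpty]
    symm
    apply Finset.prod_eq_zero (Finset.mem_range.mpr (by omega : m < i))
    have : q^m ≤ q^m := le_rfl
    omega

lemma card_trivial_inter (S : Submodule F V) (i : ℕ) :
    Nat.card {Y : Submodule F V // finrank F Y = i ∧ Y ⊓ S = ⊥}
      = (Fintype.card F)^(finrank F S * i)
          * qbin (Fintype.card F) (finrank F V - finrank F S) i := by
  classical
  set q := Fintype.card F with hqdef
  have hq : 2 ≤ q := Fintype.one_lt_card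
  set s := finrank F S with hs
  set m := finrank F V with hm
  have hquot : finrank F (V ⧸ S) = m - s := by
    have := Submodule.finrank_quotient_add_finrank S
    omega
  -- a linear section of the quotient map
  obtain ⟨σ, hσ⟩ := S.mkQ.exists_rightInverse_of_surjective (Submodule.range_mkQ S)
  have hσ' : ∀ y, S.mkQ (σ y) = y := fun y => LinearMap.congr_fun hσ y
  have hmk0 : ∀ x : S, S.mkQ (x : V) = 0 := by
    intro x
    rw [Submodule.mkQ_apply, Submodule.Quotient.mk_eq_zero]
    exact x.2
  set T := {sv : Fin i → V // LinearIndependent F (S.mkQ ∘ sv)} with hT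
  -- Equiv 1 : T ≃ independent tuples in quotient × (Fin i → S)
  have e1 : T ≃ {u : Fin i → (V ⧸ S) // LinearIndependent F u} × (Fin i → S) := by
    refine ⟨fun sv => ⟨⟨S.mkQ ∘ sv.1, sv.2⟩, fun j => ⟨sv.1 j - σ (S.mkQ (sv.1 j)), ?_⟩⟩,
      fun p => ⟨fun j => σ (p.1.1 j) + (p.2 j : V), ?_⟩, ?_, ?_⟩
    · rw [← Submodule.Quotient.mk_eq_zero S, ← Submodule.mkQ_apply]
      rw [map_sub, hσ', sub_self]
    · have : S.mkQ ∘ (fun j => σ (p.1.1 j) + (p.2 j : V)) = p.1.1 := by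
        funext j
        simp only [Function.comp_apply, map_add, hσ', hmk0, add_zero]
      rw [this]; exact p.1.2
    · intro sv
      apply Subtype.ext; funext j
      show σ (S.mkQ (sv.1 j)) + (sv.1 j - σ (S.mkQ (sv.1 j))) = sv.1 j
      abel
    · rintro ⟨u, t⟩
      refine Prod.ext (Subtype.ext ?_) ?_
      · funext j
        show S.mkQ _ = u.1 j
        simp only [map_add, hσ', hmk0, add_zero]
      · funext j
        apply Subtype.ext
        show σ (u.1 j) + (t j : V) - σ (S.mkQ (σ (u.1 j) + (t j : V))) = (t j : V)
        rw [map_add, hσ', hmk0, add_zero, add_sub_cancel_left]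
  have cardT : Nat.card T
      = (∏ j ∈ Finset.range i, (q^(m-s) - q^j)) * q^(s*i) := by
    rw [Nat.card_congr e1, Nat.card_prod, card_li, hquot]
    congr 1
    rw [Nat.card_fun, Nat.card_eq_fintype_card (α := S), Nat.card_eq_fintype_card,
      Fintype.card_fin, card_eq_pow_finrank (K := F) (V := S), ← hs, ← pow_mul]
  -- fibration over subspaces
  set f2 : T → {Y : Submodule F V // finrank F Y = i ∧ Y ⊓ S = ⊥} := fun sv =>
    ⟨Submodule.span F (Set.range sv.1), by
      have hli : LinearIndependent F sv.1 := sv.2.of_comp S.mkQ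
      constructor
      · rw [finrank_span_eq_card hli, Fintype.card_fin]
      · -- span ⊓ S = ⊥ via rank-nullity for mkQ restricted to the span
        set Y := Submodule.span F (Set.range sv.1) with hY
        have hYr : finrank F Y = i := by rw [hY, finrank_span_eq_card hli, Fintype.card_fin]
        set g := S.mkQ.comp Y.subtype with hg
        have hrange : LinearMap.range g = Submodule.map S.mkQ Y := by
          rw [hg, LinearMap.range_comp, Submodule.range_subtype]
        have hmapY : Submodule.map S.mkQ Y = Submodule.span F (Set.range (S.mkQ ∘ sv.1)) := by
          rw [hY, Submodule.map_span, Set.range_comp]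
        have hfr : finrank F (LinearMap.range g) = i := by
          rw [hrange, hmapY, finrank_span_eq_card sv.2, Fintype.card_fin]
        have hker : finrank F (LinearMap.ker g) = 0 := by
          have := g.finrank_range_add_finrank_ker
          rw [hfr, hYr] at this
          omega
        have hkerbot : LinearMap.ker g = ⊥ := Submodule.finrank_eq_zero.mp hker
        have hkereq : LinearMap.ker g = Submodule.comap Y.subtype S := by
          rw [hg, LinearMap.ker_comp, Submodule.ker_mkQ]
        rw [← Submodule.map_comap_subtype, ← hkereq, hkerbot, Submodule.map_bot]⟩
    with hf2
  have fiber_equiv : ∀ Y : {Y : Submodule F V // finrank F Y = i ∧ Y ⊓ S = ⊥},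
      {sv : T // f2 sv = Y} ≃ {t : Fin i → (Y : Submodule F V) // LinearIndependent F t} := by
    intro Y
    have hkerY : LinearMap.ker (S.mkQ.comp (Y.1).subtype) = ⊥ := by
      have hkereq : LinearMap.ker (S.mkQ.comp (Y.1).subtype) = Submodule.comap (Y.1).subtype S := by
        rw [LinearMap.ker_comp, Submodule.ker_mkQ]
      have : Submodule.map (Y.1).subtype (Submodule.comap (Y.1).subtype S) = ⊥ := by
        rw [Submodule.map_comap_subtype, Y.2.2]
      rw [hkereq]
      exact Submodule.map_injective_of_injective (Y.1).injective_subtype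
        (by rw [this, Submodule.map_bot])
    refine ⟨fun sv => ⟨fun j => ⟨sv.1.1 j, ?_⟩, ?_⟩, fun t => ⟨⟨(Y.1).subtype ∘ t.1, ?_⟩, ?_⟩,
      ?_, ?_⟩
    · have : Submodule.span F (Set.range sv.1.1) = Y.1 := congrArg Subtype.val sv.2
      rw [← this]
      exact Submodule.subset_span (Set.mem_range_self j)
    · exact (sv.1.2.of_comp S.mkQ).of_comp (Y.1).subtype
    · -- mkQ ∘ subtype ∘ t is independent
      have := t.2.map' (S.mkQ.comp (Y.1).subtype) hkerY
      exact this
    · apply Subtype.ext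
      show Submodule.span F (Set.range ((Y.1).subtype ∘ t.1)) = Y.1
      rw [Set.range_comp, ← Submodule.map_span]
      have hspan : Submodule.span F (Set.range t.1) = ⊤ := by
        apply Submodule.eq_top_of_finrank_eq
        rw [finrank_span_eq_card (t.2), Fintype.card_fin, Y.2.1]
      rw [hspan, Submodule.map_top, Submodule.range_subtype]
    · intro sv; apply Subtype.ext; apply Subtype.ext; rfl
    · intro t; apply Subtype.ext; rfl
  -- double counting
  have hcalc : Nat.card {Y : Submodule F V // finrank F Y = i ∧ Y ⊓ S = ⊥}
        * ∏ j ∈ Finset.range i, (q^i - q^j)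
      = (q^(s*i) * qbin q (m - s) i) * ∏ j ∈ Finset.range i, (q^i - q^j) := by
    calc Nat.card {Y : Submodule F V // finrank F Y = i ∧ Y ⊓ S = ⊥}
          * ∏ j ∈ Finset.range i, (q^i - q^j)
        = ∑ Y : {Y : Submodule F V // finrank F Y = i ∧ Y ⊓ S = ⊥},
            ∏ j ∈ Finset.range i, (q^i - q^j) := by
          rw [Finset.sum_const, Nat.card_eq_fintype_card, Finset.card_univ, smul_eq_mul]
      _ = ∑ Y : {Y : Submodule F V // finrank F Y = i ∧ Y ⊓ S = ⊥},
            Nat.card {sv : T // f2 sv = Y} := by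
          refine Finset.sum_congr rfl fun Y _ => ?_
          rw [Nat.card_congr (fiber_equiv Y)]
          have : finrank F (Y : Submodule F V) = i := Y.2.1
          rw [card_li, this]
      _ = Nat.card T := by
          simp only [Nat.card_eq_fintype_card]
          rw [← Fintype.card_sigma]
          exact Fintype.card_congr (Equiv.sigmaFiberEquiv f2)
      _ = (q^(s*i) * qbin q (m - s) i) * ∏ j ∈ Finset.range i, (q^i - q^j) := by
          rw [cardT, ← qbin_mul_prod (by omega : 1 ≤ q) (m-s) i]
          ring
  exact Nat.eq_of_mul_eq_mul_right (prod_pos hq i) hcalc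
end LemB

lemma qbin_symm (F : Type*) [Field F] [Fintype F] {k i : ℕ} (h : i ≤ k) :
    qbin (Fintype.card F) k (k - i) = qbin (Fintype.card F) k i := by
  classical
  set V := Fin k → F
  set D := Module.Dual F V
  haveI : Finite D :=
    Finite.of_injective (fun f => (f : V → F)) DFunLike.coe_injective
  have hV : finrank F V = k := by
    simp [V, Module.finrank_fintype_fun_eq_card]
  have hD : finrank F D = k := by
    rw [Subspace.dual_finrank_eq (K := F) (V := V), hV]
  have hann : ∀ W : Submodule F V, finrank F W.dualAnnihilator = k - finrank F W := by
    intro W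
    have e : finrank F (V ⧸ W) = finrank F W.dualAnnihilator :=
      (Subspace.quotEquivAnnihilator W).finrank_eq
    have h2 := Submodule.finrank_quotient_add_finrank W
    rw [hV] at h2
    omega
  have hcoann : ∀ A : Submodule F D, finrank F A.dualCoannihilator = k - finrank F A := by
    intro A
    have h1 : finrank F A + finrank F A.dualCoannihilator = finrank F V :=
      Subspace.finrank_add_finrank_dualCoannihilator_eq A
    rw [hV] at h1
    omega
  have e : {W : Submodule F V // finrank F W = k - i} ≃ {A : Submodule F D // finrank F A = i} :=
    { toFun := fun W => ⟨W.1.dualAnnihilator, by rw [hann, W.2]; omega⟩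
      invFun := fun A => ⟨A.1.dualCoannihilator, by
        rw [hcoann, A.2]⟩
      left_inv := fun W => Subtype.ext (Subspace.dualAnnihilator_dualCoannihilator_eq)
      right_inv := fun A => Subtype.ext (Subspace.dualCoannihilator_dualAnnihilator_eq) }
  have := Nat.card_congr e
  rwa [card_grassmannian, card_grassmannian, hV, hD] at this

section Main
variable {F V : Type*} [Field F] [Fintype F] [AddCommGroup V] [Module F V] [Finite V]

attribute [local instance] Fintype.ofFinite

lemma mem_comap_mkQ {W : Submodule F V} {Y' : Submodule F (V ⧸ W)} {x : V} (hx : x ∈ W) :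
    x ∈ Submodule.comap W.mkQ Y' := by
  simp only [Submodule.mem_comap, Submodule.mkQ_apply]
  rw [(Submodule.Quotient.mk_eq_zero _).mpr hx]
  exact Submodule.zero_mem _

lemma finrank_map_mkQ_add {W Y : Submodule F V} (h : W ≤ Y) :
    finrank F (Submodule.map W.mkQ Y) + finrank F W = finrank F Y := by
  classical
  have hrange : LinearMap.range (W.mkQ.comp Y.subtype) = Submodule.map W.mkQ Y := by
    rw [LinearMap.range_comp, Submodule.range_subtype]
  have hker : LinearMap.ker (W.mkQ.comp Y.subtype) = Submodule.comap Y.subtype W := by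
    rw [LinearMap.ker_comp, Submodule.ker_mkQ]
  have hmap : Submodule.map Y.subtype (Submodule.comap Y.subtype W) = W := by
    rw [Submodule.map_comap_subtype, inf_eq_right.mpr h]
  have hkerrank : finrank F (Submodule.comap Y.subtype W) = finrank F W := by
    conv_rhs => rw [← hmap]
    exact (Submodule.equivMapOfInjective Y.subtype Y.injective_subtype
      (Submodule.comap Y.subtype W)).finrank_eq
  have h2 := (W.mkQ.comp Y.subtype).finrank_range_add_finrank_ker
  rw [hrange, hker, hkerrank] at h2
  exact h2

/-- The key fiber count: subspaces `Y` of dimension `k` with `X ⊓ Y = W`. -/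
lemma card_fiber (X W : Submodule F V) (k i : ℕ) (hX : finrank F X = k)
    (hWX : W ≤ X) (hW : finrank F W = k - i) (hik : i ≤ k) (hkn : k ≤ finrank F V) :
    Nat.card {Y : Submodule F V // finrank F Y = k ∧ X ⊓ Y = W}
      = (Fintype.card F)^(i*i) * qbin (Fintype.card F) (finrank F V - k) i := by
  classical
  have hXrank : finrank F (Submodule.map W.mkQ X) = i := by
    have := finrank_map_mkQ_add (F := F) hWX
    rw [hW, hX] at this
    omega
  have hquotrank : finrank F (V ⧸ W) = finrank F V - (k - i) := by
    have := Submodule.finrank_quotient_add_finrank W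
    rw [hW] at this
    omega
  haveI : Finite (V ⧸ W) := Finite.of_surjective W.mkQ (Submodule.mkQ_surjective W)
  have e : {Y : Submodule F V // finrank F Y = k ∧ X ⊓ Y = W}
      ≃ {Y' : Submodule F (V ⧸ W) // finrank F Y' = i ∧ Y' ⊓ (Submodule.map W.mkQ X) = ⊥} := by
    refine ⟨fun Y => ⟨Submodule.map W.mkQ Y.1, ?_, ?_⟩,
      fun Y' => ⟨Submodule.comap W.mkQ Y'.1, ?_, ?_⟩, ?_, ?_⟩
    · have hWY : W ≤ Y.1 := by
        have h22 : W ≤ X ⊓ Y.1 := le_of_eq Y.2.2.symm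
        exact h22.trans inf_le_right
      have := finrank_map_mkQ_add (F := F) hWY
      rw [hW, Y.2.1] at this
      omega
    · have hWY : W ≤ Y.1 := by
        have h22 : W ≤ X ⊓ Y.1 := le_of_eq Y.2.2.symm
        exact h22.trans inf_le_right
      rw [inf_comm, Submodule.map_inf_eq_map_inf_comap, Submodule.comap_map_mkQ,
        sup_eq_right.mpr hWY, Y.2.2]
      rw [eq_bot_iff]
      rintro x ⟨w, hw, rfl⟩
      simp only [Submodule.mem_bot, Submodule.mkQ_apply]
      rw [Submodule.Quotient.mk_eq_zero]
      exact hw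
    · have hWY : W ≤ Submodule.comap W.mkQ Y'.1 := fun x hx => mem_comap_mkQ hx
      have hmap : Submodule.map W.mkQ (Submodule.comap W.mkQ Y'.1) = Y'.1 := by
        rw [Submodule.map_comap_eq, Submodule.range_mkQ, top_inf_eq]
      have := finrank_map_mkQ_add (F := F) hWY
      rw [hmap, hW, Y'.2.1] at this
      omega
    · apply le_antisymm
      · rintro x ⟨hxX, hxY⟩
        have hx' : W.mkQ x ∈ Y'.1 ⊓ (Submodule.map W.mkQ X) :=
          ⟨hxY, ⟨x, hxX, rfl⟩⟩
        rw [Y'.2.2, Submodule.mem_bot, Submodule.mkQ_apply,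
          Submodule.Quotient.mk_eq_zero] at hx'
        exact hx'
      · exact le_inf hWX (fun x hx => mem_comap_mkQ hx)
    · intro Y
      apply Subtype.ext
      show Submodule.comap W.mkQ (Submodule.map W.mkQ Y.1) = Y.1
      have hWY : W ≤ Y.1 := by
        have h22 : W ≤ X ⊓ Y.1 := le_of_eq Y.2.2.symm
        exact h22.trans inf_le_right
      rw [Submodule.comap_map_mkQ, sup_eq_right.mpr hWY]
    · intro Y'
      apply Subtype.ext
      show Submodule.map W.mkQ (Submodule.comap W.mkQ Y'.1) = Y'.1
      rw [Submodule.map_comap_eq, Submodule.range_mkQ, top_inf_eq]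
  rw [Nat.card_congr e, card_trivial_inter (Submodule.map W.mkQ X) i, hXrank, hquotrank]
  congr 2
  omega
end Main

section Main2
variable {F V : Type*} [Field F] [Fintype F] [AddCommGroup V] [Module F V] [Finite V]

attribute [local instance] Fintype.ofFinite

/-- Number of subspaces of `X` of fixed dimension `k - i`. -/
lemma card_sub (X : Submodule F V) (k i : ℕ) (hX : finrank F X = k) (hik : i ≤ k) :
    Nat.card {W : Submodule F V // W ≤ X ∧ finrank F W = k - i}
      = qbin (Fintype.card F) k i := by
  classical
  have e2 : {W : Submodule F V // W ≤ X ∧ finrank F W = k - i}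
      ≃ {W' : Submodule F ↥X // finrank F W' = k - i} := by
    refine ⟨fun W => ⟨Submodule.comap X.subtype W.1, ?_⟩,
      fun W' => ⟨Submodule.map X.subtype W'.1, Submodule.map_subtype_le _ _, ?_⟩, ?_, ?_⟩
    · have hmap : Submodule.map X.subtype (Submodule.comap X.subtype W.1) = W.1 := by
        rw [Submodule.map_comap_subtype, inf_eq_right.mpr W.2.1]
      have := (Submodule.equivMapOfInjective X.subtype X.injective_subtype
        (Submodule.comap X.subtype W.1)).finrank_eq
      rw [hmap] at this
      rw [this]; exact W.2.2
    · have := (Submodule.equivMapOfInjective X.subtype X.injective_subtype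
        W'.1).finrank_eq
      rw [← this]; exact W'.2
    · intro W
      apply Subtype.ext
      show Submodule.map X.subtype (Submodule.comap X.subtype W.1) = W.1
      rw [Submodule.map_comap_subtype, inf_eq_right.mpr W.2.1]
    · intro W'
      apply Subtype.ext
      show Submodule.comap X.subtype (Submodule.map X.subtype W'.1) = W'.1
      rw [Submodule.comap_map_eq, Submodule.ker_subtype, sup_bot_eq]
  rw [Nat.card_congr e2, card_grassmannian, hX, qbin_symm F hik]

/-- Number of `k`-dimensional subspaces whose intersection with `X` has dimension exactly
`k - i`. -/
lemma card_exact (X : Submodule F V) (k i : ℕ) (hX : finrank F X = k) (hik : i ≤ k)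
    (hkn : k ≤ finrank F V) :
    Nat.card {Y : Submodule F V // finrank F Y = k ∧ finrank F ↥(X ⊓ Y) = k - i}
      = qbin (Fintype.card F) k i
          * ((Fintype.card F)^(i*i) * qbin (Fintype.card F) (finrank F V - k) i) := by
  classical
  set q := Fintype.card F
  let g : {Y : Submodule F V // finrank F Y = k ∧ finrank F ↥(X ⊓ Y) = k - i}
      → {W : Submodule F V // W ≤ X ∧ finrank F W = k - i} :=
    fun Y => ⟨X ⊓ Y.1, inf_le_left, Y.2.2⟩
  have fib : ∀ W : {W : Submodule F V // W ≤ X ∧ finrank F W = k - i},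
      {Y // g Y = W} ≃ {Y : Submodule F V // finrank F Y = k ∧ X ⊓ Y = W.1} := by
    intro W
    refine ⟨fun Y => ⟨Y.1.1, Y.1.2.1, congrArg Subtype.val Y.2⟩,
      fun Y => ⟨⟨Y.1, Y.2.1, ?_⟩, Subtype.ext Y.2.2⟩, ?_, ?_⟩
    · rw [Y.2.2]; exact W.2.2
    · intro Y; apply Subtype.ext; apply Subtype.ext; rfl
    · intro Y; apply Subtype.ext; rfl
  calc Nat.card {Y : Submodule F V // finrank F Y = k ∧ finrank F ↥(X ⊓ Y) = k - i}
      = ∑ W : {W : Submodule F V // W ≤ X ∧ finrank F W = k - i},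
          Nat.card {Y // g Y = W} := by
        simp only [Nat.card_eq_fintype_card]
        rw [← Fintype.card_sigma]
        exact Fintype.card_congr (Equiv.sigmaFiberEquiv g).symm
    _ = ∑ W : {W : Submodule F V // W ≤ X ∧ finrank F W = k - i},
          q^(i*i) * qbin q (finrank F V - k) i := by
        refine Finset.sum_congr rfl fun W _ => ?_
        rw [Nat.card_congr (fib W), card_fiber X W.1 k i hX W.2.1 W.2.2 hik hkn]
    _ = qbin q k i * (q^(i*i) * qbin q (finrank F V - k) i) := by
        rw [Finset.sum_const, Finset.card_univ, smul_eq_mul, ← Nat.card_eq_fintype_card,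
          card_sub X k i hX hik]

/-- The ball count, abstract version. -/
lemma card_ball (X : Submodule F V) (k r : ℕ) (hX : finrank F X = k) (hr : r ≤ k)
    (hkn : k ≤ finrank F V) :
    Nat.card {Y : Submodule F V // finrank F Y = k ∧ k - r ≤ finrank F ↥(X ⊓ Y)}
      = ∑ i ∈ Finset.range (r + 1), (Fintype.card F) ^ (i ^ 2) * qbin (Fintype.card F) k i
          * qbin (Fintype.card F) (finrank F V - k) i := by
  classical
  have hfrle : ∀ Y : Submodule F V, finrank F ↥(X ⊓ Y) ≤ k := by
    intro Y
    have : finrank F ↥(X ⊓ Y) ≤ finrank F ↥X := Submodule.finrank_mono inf_le_left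
    omega
  let f3 : {Y : Submodule F V // finrank F Y = k ∧ k - r ≤ finrank F ↥(X ⊓ Y)} → Fin (r+1) :=
    fun Y => ⟨k - finrank F ↥(X ⊓ Y.1), by have := Y.2.2; omega⟩
  have e1 : ∀ i : Fin (r+1), {Y // f3 Y = i}
      ≃ {Y : Submodule F V // finrank F Y = k ∧ finrank F ↥(X ⊓ Y) = k - (i:ℕ)} := by
    intro i
    have hik : (i : ℕ) ≤ r := Nat.lt_succ_iff.mp i.isLt
    refine ⟨fun Y => ⟨Y.1.1, Y.1.2.1, ?_⟩, fun Y => ⟨⟨Y.1, Y.2.1, ?_⟩, ?_⟩, ?_, ?_⟩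
    · have h2 : k - finrank F ↥(X ⊓ Y.1.1) = (i:ℕ) := congrArg Fin.val Y.2
      have h3 := hfrle Y.1.1
      omega
    · have := Y.2.2
      omega
    · apply Fin.ext
      show k - finrank F ↥(X ⊓ Y.1) = (i:ℕ)
      rw [Y.2.2]
      omega
    · intro Y; apply Subtype.ext; apply Subtype.ext; rfl
    · intro Y; apply Subtype.ext; rfl
  calc Nat.card {Y : Submodule F V // finrank F Y = k ∧ k - r ≤ finrank F ↥(X ⊓ Y)}
      = ∑ i : Fin (r+1), Nat.card {Y // f3 Y = i} := by
        simp only [Nat.card_eq_fintype_card]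
        rw [← Fintype.card_sigma]
        exact Fintype.card_congr (Equiv.sigmaFiberEquiv f3).symm
    _ = ∑ i : Fin (r+1), (Fintype.card F) ^ ((i:ℕ) ^ 2) * qbin (Fintype.card F) k (i:ℕ)
          * qbin (Fintype.card F) (finrank F V - k) (i:ℕ) := by
        refine Finset.sum_congr rfl fun i _ => ?_
        have hik : (i : ℕ) ≤ k := le_trans (Nat.lt_succ_iff.mp i.isLt) hr
        rw [Nat.card_congr (e1 i), card_exact X k (i:ℕ) hX hik hkn, pow_two]
        ring
    _ = ∑ i ∈ Finset.range (r + 1), (Fintype.card F) ^ (i ^ 2) * qbin (Fintype.card F) k i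
          * qbin (Fintype.card F) (finrank F V - k) i := by
        rw [← Fin.sum_univ_eq_sum_range]
end Main2

/-- The ball of radius `r` in the injection metric on the Grassmannian
`G_q(k,n)` centered at any `k`-dimensional subspace `X` has size
`Σ_{i=0}^r q^{i²} [k choose i]_q [n-k choose i]_q`, independently of `X`. -/
theorem stmt_10 (q n k r : ℕ) (hq : IsPrimePow q) (hk : 1 ≤ k) (hkn : k ≤ n) (hr : r ≤ k)
    (F : Type) [Field F] [Fintype F] (hF : Fintype.card F = q)
    (X : Submodule F (Fin n → F)) (hX : Module.finrank F X = k) :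
    Nat.card {Y : Submodule F (Fin n → F) // Module.finrank F Y = k ∧
        k - r ≤ Module.finrank F ↥(X ⊓ Y)}
      = ∑ i ∈ Finset.range (r + 1), q ^ (i ^ 2) * qbin q k i * qbin q (n - k) i := by
  subst hF
  have hn : finrank F (Fin n → F) = n := by
    rw [Module.finrank_fintype_fun_eq_card, Fintype.card_fin]
  rw [card_ball X k r hX hr (by omega), hn]
end
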